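/- arXiv:2511.06737 — 4 statements merged into one kernel-verified Lean document; each statement's English description precedes it below -/
import Mathlib

section
/- There exists a constant C > 0 such that for all n ≥ 1, |a(n) − √(2/π)·n^{−1/2}·2^n| ≤ C·n^{−3/2}·2^n. In particular a(n) is asymptotically equal to √(2/π)·n^{−1/2}·2^n as n → ∞. -/
open Filter Real

/-- `aa n m` = number of length-`n` paths on `ℤ≥0` with steps `±1` starting at `0`
and ending at `m`. -/
def aa : ℕ → ℕ → ℕ
  | 0, m => if m = 0 then 1 else 0
  | n+1, m => aa n (m+1) + (if m = 0 then 0 else aa n (m-1))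

/-- `aSum n = Σ_{m=0}^n aa n m`. -/
def aSum (n : ℕ) : ℕ := ∑ m ∈ Finset.range (n+1), aa n m

/-- The modular variant `b(n,m)` depending on `ℓ`:
`b(n,m) = a(n,m)` if `m ≡ ℓ-1 (mod ℓ)`; otherwise `b(0,m) = δ_{m,0}`, and for `n ≥ 1`,
`b(n,m) = b(n-1,m-1) + b(n-1,m+1)` if `m % ℓ < ℓ-2` (negative-index terms are `0`),
and `b(n,m) = b(n-1,m-1)` if `m ≡ ℓ-2 (mod ℓ)`. -/
def bb (ℓ : ℕ) : ℕ → ℕ → ℕ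
  | 0, m => if m % ℓ = ℓ - 1 then aa 0 m else if m = 0 then 1 else 0
  | n+1, m =>
    if m % ℓ = ℓ - 1 then aa (n+1) m
    else if m % ℓ = ℓ - 2 then (if m = 0 then 0 else bb ℓ n (m-1))
    else (if m = 0 then 0 else bb ℓ n (m-1)) + bb ℓ n (m+1)

/-- `bSum ℓ n = Σ_{m=0}^n bb ℓ n m`. -/
def bSum (ℓ : ℕ) (n : ℕ) : ℕ := ∑ m ∈ Finset.range (n+1), bb ℓ n m

/-- `cc ℓ n r = Σ_{m ≥ 0, m ≡ r (mod ℓ)} aa n m` (finite since `aa n m = 0` for `m > n`). -/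
def cc (ℓ : ℕ) (n r : ℕ) : ℕ :=
  ∑ m ∈ Finset.range (n+1), if m % ℓ = r then aa n m else 0

/-- `ww ℓ n = Σ_{0 ≤ m ≤ n, m ≡ ℓ-1 (mod ℓ)} bb ℓ n m`. -/
def ww (ℓ : ℕ) (n : ℕ) : ℕ :=
  ∑ m ∈ Finset.range (n+1), if m % ℓ = ℓ - 1 then bb ℓ n m else 0

lemma aa_zero_of_lt : ∀ n m : ℕ, n < m → aa n m = 0 := by
  intro n
  induction n with
  | zero => intro m h; simp [aa]; omega
  | succ n ih =>
    intro m h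
    rw [aa]
    rw [ih (m+1) (by omega)]
    rcases Nat.eq_zero_or_pos m with h0 | h0
    · omega
    · rw [if_neg (by omega), ih (m-1) (by omega)]

lemma aa_zero_of_odd : ∀ n m : ℕ, (n + m) % 2 = 1 → aa n m = 0 := by
  intro n
  induction n with
  | zero => intro m h; simp [aa]; omega
  | succ n ih =>
    intro m h
    rw [aa, ih (m+1) (by omega)]
    rcases Nat.eq_zero_or_pos m with h0 | h0
    · simp [h0]
    · rw [if_neg (by omega), ih (m-1) (by omega)]

lemma aa_formula : ∀ n m : ℕ, (n + m) % 2 = 0 →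
    (aa n m : ℤ) = (n.choose ((n+m)/2) : ℤ) - n.choose ((n+m)/2 + 1) := by
  intro n
  induction n with
  | zero =>
    intro m h
    rcases Nat.eq_zero_or_pos m with h0 | h0
    · subst h0; simp [aa]
    · have : m / 2 ≥ 1 := by omega
      simp only [aa, if_neg (by omega : ¬ m = 0), Nat.zero_add]
      rw [Nat.choose_eq_zero_of_lt (by omega), Nat.choose_eq_zero_of_lt (by omega)]
      simp
  | succ n ih =>
    intro m h
    rcases Nat.eq_zero_or_pos m with h0 | h0
    · -- m = 0, n odd
      subst h0
      obtain ⟨t, ht⟩ : ∃ t, n = 2*t + 1 := ⟨n/2, by omega⟩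
      rw [aa, if_pos rfl]
      push_cast
      rw [ih 1 (by omega)]
      have e1 : (n+1)/2 = t+1 := by omega
      rw [e1]
      have p1 : (n+1).choose (t+1) = n.choose t + n.choose (t+1) := Nat.choose_succ_succ n t
      have p2 : (n+1).choose (t+2) = n.choose (t+1) + n.choose (t+2) := Nat.choose_succ_succ n (t+1)
      have sym : n.choose t = n.choose (t+1) := by
        rw [ht]; exact (Nat.choose_symm_half t).symm
      rw [p1, p2]
      push_cast
      rw [sym]
      ring
  -- m ≥ 1
    · obtain ⟨m', hm⟩ : ∃ m', m = m' + 1 := ⟨m-1, by omega⟩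
      subst hm
      rw [aa, if_neg (by omega)]
      simp only [Nat.add_sub_cancel]
      push_cast
      rw [ih (m'+2) (by omega), ih m' (by omega)]
      set j := (n + m')/2 with hj
      have e1 : (n + (m'+2))/2 = j + 1 := by omega
      have e2 : (n + 1 + (m'+1))/2 = j + 1 := by omega
      rw [e1, e2]
      have p1 : (n+1).choose (j+1) = n.choose j + n.choose (j+1) := Nat.choose_succ_succ n j
      have p2 : (n+1).choose (j+2) = n.choose (j+1) + n.choose (j+2) := Nat.choose_succ_succ n (j+1)
      rw [p1, p2]
      push_cast
      ring

lemma aSum_rec (n : ℕ) : aSum (n+1) + aa n 0 = 2 * aSum n := by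
  have h1 : ∑ m ∈ Finset.range (n+2), aa (n+1) m
      = ∑ m ∈ Finset.range (n+2), (aa n (m+1) + if m = 0 then 0 else aa n (m-1)) := by
    apply Finset.sum_congr rfl; intro m _; rw [aa]
  have h2 : ∑ m ∈ Finset.range (n+3), aa n m
      = ∑ m ∈ Finset.range (n+2), aa n (m+1) + aa n 0 := Finset.sum_range_succ' _ _
  have h3 : ∑ m ∈ Finset.range (n+3), aa n m = aSum n := by
    rw [Finset.sum_range_succ, Finset.sum_range_succ, aa_zero_of_lt n (n+1) (by omega),
      aa_zero_of_lt n (n+2) (by omega)]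
    simp [aSum]
  have h4 : ∑ m ∈ Finset.range (n+2), (if m = 0 then 0 else aa n (m-1)) = aSum n := by
    rw [Finset.sum_range_succ' (fun m => if m = 0 then 0 else aa n (m-1)) (n+1)]
    simp [aSum]
  show (∑ m ∈ Finset.range (n+2), aa (n+1) m) + aa n 0 = 2 * aSum n
  rw [h1, Finset.sum_add_distrib, h4]
  omega

lemma aSum_eq (n : ℕ) : aSum n = n.choose (n/2) := by
  induction n with
  | zero => simp [aSum, aa]
  | succ n ih =>
    have hrec := aSum_rec n
    rcases Nat.even_or_odd n with he | ho
    · obtain ⟨t, ht⟩ := he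
      have ht' : n = 2 * t := by omega
      have hf : (aa n 0 : ℤ) = (n.choose t : ℤ) - n.choose (t+1) := by
        have := aa_formula n 0 (by omega)
        rwa [show (n+0)/2 = t by omega] at this
      have hcast : (aSum (n+1) : ℤ) = (n.choose t : ℤ) + n.choose (t+1) := by
        have h2 : ((aSum (n+1) : ℤ)) + (aa n 0 : ℤ) = 2 * aSum n := by exact_mod_cast congrArg (Nat.cast : ℕ → ℤ) hrec
        rw [hf, ih, show n/2 = t by omega] at h2
        linarith
      have hp : (n+1).choose (t+1) = n.choose t + n.choose (t+1) := Nat.choose_succ_succ n t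
      have hsym : (n+1).choose t = (n+1).choose (t+1) := by
        rw [ht']; exact (Nat.choose_symm_half t).symm
      have : (aSum (n+1) : ℤ) = ((n+1).choose ((n+1)/2) : ℤ) := by
        rw [show (n+1)/2 = t by omega, hsym, hp, hcast]; push_cast; ring
      exact_mod_cast this
    · obtain ⟨t, ht⟩ := ho
      have h0 : aa n 0 = 0 := aa_zero_of_odd n 0 (by omega)
      rw [h0] at hrec
      have hp : (n+1).choose (t+1) = n.choose t + n.choose (t+1) := Nat.choose_succ_succ n t
      have hsym : n.choose t = n.choose (t+1) := by
        rw [ht]; exact (Nat.choose_symm_half t).symm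
      have h1 : aSum n = n.choose t := by rw [ih, show n/2 = t by omega]
      have : aSum (n+1) = (n+1).choose (t+1) := by omega
      rw [this, show (n+1)/2 = t+1 by omega]


noncomputable def cbr (k : ℕ) : ℝ := (Nat.centralBinom k : ℝ) / 4^k

lemma cbr_pos (k : ℕ) : 0 < cbr k := by
  apply div_pos (by exact_mod_cast Nat.centralBinom_pos k) (by positivity)

lemma cbr_rec (k : ℕ) : cbr (k+1) = cbr k * (2*k+1) / (2*k+2) := by
  have h := Nat.succ_mul_centralBinom_succ k
  have h' : ((k+1 : ℕ) : ℝ) * (Nat.centralBinom (k+1) : ℝ) = 2 * (2*k+1) * Nat.centralBinom k := by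
    exact_mod_cast congrArg (Nat.cast : ℕ → ℝ) h
  unfold cbr
  push_cast at h' ⊢
  have hk : ((k:ℝ)+1) ≠ 0 := by positivity
  field_simp
  linear_combination (2 * (4:ℝ)^k) * h'

lemma wallis_eq (k : ℕ) :
    (∏ i ∈ Finset.range k, ((2:ℝ) * i + 2) / (2 * i + 1) * ((2 * i + 2) / (2 * i + 3)))
      = 1 / ((2*k+1) * (cbr k)^2) := by
  induction k with
  | zero => simp [cbr, Nat.centralBinom]
  | succ k ih =>
    rw [Finset.prod_range_succ, ih, cbr_rec]
    have h1 : (0:ℝ) < 2*k+1 := by positivity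
    have h2 : (0:ℝ) < 2*k+3 := by positivity
    have h3 : (0:ℝ) < 2*k+2 := by positivity
    have h4 := cbr_pos k
    push_cast
    field_simp
    ring

lemma v_tendsto : Tendsto (fun k : ℕ => (2*(k:ℝ)+1) * (cbr k)^2) atTop (nhds (2/π)) := by
  have h := Real.tendsto_prod_pi_div_two
  have h2 : Tendsto (fun k : ℕ => 1 / ((2*(k:ℝ)+1) * (cbr k)^2)) atTop (nhds (π/2)) := by
    convert h using 2 with k
    exact (wallis_eq k).symm
  have hπ : (π/2 : ℝ) ≠ 0 := by positivity
  have := h2.inv₀ hπ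
  simp only [one_div, inv_inv] at this
  convert this using 2
  rw [inv_div]

lemma u_mono : Monotone (fun k : ℕ => 2*(k:ℝ) * (cbr k)^2) := by
  apply monotone_nat_of_le_succ
  intro k
  have h4 := cbr_pos k
  have expand : 2*((k:ℝ)+1)*(cbr (k+1))^2 - 2*(k:ℝ)*(cbr k)^2
      = (cbr k)^2/(2*((k:ℝ)+1)) := by
    rw [cbr_rec]
    have h3 : ((k:ℝ)+1) ≠ 0 := by positivity
    field_simp
    ring
  have hpos : 0 < (cbr k)^2/(2*((k:ℝ)+1)) := by positivity
  push_cast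
  linarith

lemma v_anti : Antitone (fun k : ℕ => (2*(k:ℝ)+1) * (cbr k)^2) := by
  apply antitone_nat_of_succ_le
  intro k
  have h4 := cbr_pos k
  have expand : (2*(k:ℝ)+1)*(cbr k)^2 - (2*((k:ℝ)+1)+1)*(cbr (k+1))^2
      = (cbr k)^2*(2*(k:ℝ)+1)/(2*(k:ℝ)+2)^2 := by
    rw [cbr_rec]
    have h3 : ((k:ℝ)+1) ≠ 0 := by positivity
    field_simp
    ring
  have hpos : 0 ≤ (cbr k)^2*(2*(k:ℝ)+1)/(2*(k:ℝ)+2)^2 := by positivity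
  push_cast
  linarith

lemma u_tendsto : Tendsto (fun k : ℕ => 2*(k:ℝ) * (cbr k)^2) atTop (nhds (2/π)) := by
  have hsq : Tendsto (fun k : ℕ => (cbr k)^2) atTop (nhds 0) := by
    have hv0 : ∀ k : ℕ, (2*(k:ℝ)+1)*(cbr k)^2 ≤ 1 := by
      intro k
      have h := v_anti (Nat.zero_le k)
      simpa [cbr, Nat.centralBinom_zero] using h
    apply squeeze_zero (fun k => sq_nonneg _) (g := fun k : ℕ => 1/((k:ℝ)+1))
    · intro k
      rw [le_div_iff₀ (by positivity)]
      nlinarith [hv0 k, sq_nonneg (cbr k), Nat.cast_nonneg (α := ℝ) k]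
    · exact tendsto_one_div_add_atTop_nhds_zero_nat
  have := v_tendsto.sub hsq
  simp only [sub_zero] at this
  convert this using 2 with k
  ring

lemma u_le (k : ℕ) : 2*(k:ℝ) * (cbr k)^2 ≤ 2/π := u_mono.ge_of_tendsto u_tendsto k

lemma v_ge (k : ℕ) : 2/π ≤ (2*(k:ℝ)+1) * (cbr k)^2 := v_anti.le_of_tendsto v_tendsto k

lemma cbr_upper {k : ℕ} (hk : 1 ≤ k) : cbr k ≤ Real.sqrt (1/(π*k)) := by
  have h := u_le k
  have hπ := Real.pi_pos
  have hk' : (0:ℝ) < k := by exact_mod_cast hk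
  have h2 : (cbr k)^2 ≤ 1/(π*k) := by
    rw [le_div_iff₀ hπ] at h
    rw [le_div_iff₀ (by positivity)]
    nlinarith [h]
  calc cbr k = Real.sqrt ((cbr k)^2) := (Real.sqrt_sq (cbr_pos k).le).symm
    _ ≤ _ := Real.sqrt_le_sqrt h2

lemma cbr_lower (k : ℕ) : Real.sqrt (1/(π*(k+1/2))) ≤ cbr k := by
  have h := v_ge k
  have hπ := Real.pi_pos
  have h2 : 1/(π*((k:ℝ)+1/2)) ≤ (cbr k)^2 := by
    rw [div_le_iff₀ hπ] at h
    rw [div_le_iff₀ (by positivity)]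
    nlinarith [h]
  calc Real.sqrt (1/(π*((k:ℝ)+1/2))) ≤ Real.sqrt ((cbr k)^2) := Real.sqrt_le_sqrt h2
    _ = cbr k := Real.sqrt_sq (cbr_pos k).le

lemma sqrt_inv_gap {a b : ℝ} (ha : 0 < a) (hab : a ≤ b) :
    Real.sqrt (1/a) - Real.sqrt (1/b) ≤ (b - a)/(2 * a * Real.sqrt a) := by
  have hb : 0 < b := lt_of_lt_of_le ha hab
  set x := Real.sqrt a with hx
  set y := Real.sqrt b with hy
  have hx0 : 0 < x := Real.sqrt_pos.mpr ha
  have hy0 : 0 < y := Real.sqrt_pos.mpr hb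
  have hxy : x ≤ y := Real.sqrt_le_sqrt hab
  have hx2 : x^2 = a := Real.sq_sqrt ha.le
  have hy2 : y^2 = b := Real.sq_sqrt hb.le
  have e1 : Real.sqrt (1/a) = 1/x := by rw [one_div, Real.sqrt_inv, ← one_div, hx]
  have e2 : Real.sqrt (1/b) = 1/y := by rw [one_div, Real.sqrt_inv, ← one_div, hy]
  rw [e1, e2, ← hx2, ← hy2]
  rw [div_sub_div _ _ hx0.ne' hy0.ne', div_le_div_iff₀ (by positivity) (by positivity)]
  nlinarith [mul_nonneg (mul_nonneg hx0.le (sq_nonneg (y - x))) (by linarith : (0:ℝ) ≤ y + 2*x)]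

lemma even_eq (k : ℕ) : (aSum (2*k) : ℝ) = cbr k * 2^(2*k) := by
  rw [aSum_eq, show (2*k)/2 = k by omega, ← Nat.centralBinom_eq_two_mul_choose]
  rw [cbr, div_mul_eq_mul_div, pow_mul]
  norm_num

lemma odd_eq (k : ℕ) : (aSum (2*k+1) : ℝ) = cbr (k+1) * 2^(2*k+1) := by
  rw [aSum_eq, show (2*k+1)/2 = k by omega]
  have hnat : 2 * ((2*k+1).choose k) = Nat.centralBinom (k+1) := by
    rw [Nat.centralBinom_eq_two_mul_choose, show 2*(k+1) = (2*k+1)+1 by ring,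
      Nat.choose_succ_succ, Nat.choose_symm_half k]
    ring
  have : (2:ℝ) * ((2*k+1).choose k : ℝ) = cbr (k+1) * 4^(k+1) := by
    rw [cbr, div_mul_cancel₀ _ (by positivity)]
    exact_mod_cast congrArg (Nat.cast : ℕ → ℝ) hnat
  have h4 : (4:ℝ)^(k+1) = 2 * 2^(2*k+1) := by
    rw [show (4:ℝ) = 2^2 by norm_num, ← pow_mul]
    ring
  rw [h4] at this
  linarith

set_option maxHeartbeats 1000000 in
lemma main_bound (n : ℕ) (hn : 1 ≤ n) :
    |(aSum n : ℝ) - Real.sqrt (2/π) * (n:ℝ)^(-(1:ℝ)/2) * 2^n|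
      ≤ (n:ℝ)^(-(3:ℝ)/2) * 2^n := by
  have hπ := Real.pi_pos
  have hπ3 := Real.pi_gt_three
  have hn0 : (0:ℝ) < n := by exact_mod_cast hn
  have hr1 : (n:ℝ)^(-(1:ℝ)/2) = 1/Real.sqrt n := by
    rw [show -(1:ℝ)/2 = -(1/2) by ring, Real.rpow_neg hn0.le, Real.sqrt_eq_rpow]
    norm_num
  have hr3 : (n:ℝ)^(-(3:ℝ)/2) = 1/((n:ℝ)*Real.sqrt n) := by
    rw [show -(3:ℝ)/2 = -(3/2) by ring, Real.rpow_neg hn0.le,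
      show (3:ℝ)/2 = 1 + 1/2 by ring, Real.rpow_add hn0, Real.rpow_one,
      Real.sqrt_eq_rpow]
    norm_num
  have key : Real.sqrt (2/π) * (1/Real.sqrt n) = Real.sqrt (2/(π*n)) := by
    rw [mul_one_div, ← Real.sqrt_div (by positivity), div_div]
  rw [hr1, hr3, mul_assoc, ← mul_assoc, key]
  -- reduce to |…| ≤ 1/(n√n)
  have hred : ∀ x y : ℝ, |x - y| ≤ 1/((n:ℝ)*Real.sqrt n) →
      |x * 2^n - y * 2^n| ≤ 1/((n:ℝ)*Real.sqrt n) * 2^n := by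
    intro x y h
    rw [← sub_mul, abs_mul, abs_of_nonneg (by positivity : (0:ℝ) ≤ 2^n)]
    exact mul_le_mul_of_nonneg_right h (by positivity)
  rcases Nat.even_or_odd n with ⟨k, hk⟩ | ⟨k, hk⟩
  · -- even, n = 2k, k ≥ 1
    have hk1 : 1 ≤ k := by omega
    have hk0 : (0:ℝ) < k := by exact_mod_cast hk1
    have hnr : (n:ℝ) = 2*k := by exact_mod_cast congrArg (Nat.cast : ℕ → ℝ) (by omega : n = 2*k)
    have heq : (aSum n : ℝ) = cbr k * 2^n := by
      rw [show n = 2*k by omega]; exact even_eq k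
    rw [heq]
    apply hred
    have hrad : (2:ℝ)/(π*n) = 1/(π*k) := by
      rw [hnr, div_eq_div_iff (by positivity) (by positivity)]; ring
    rw [hrad]
    have hup := cbr_upper hk1
    have hlo := cbr_lower k
    rw [abs_of_nonpos (by linarith), neg_sub]
    have hgap := sqrt_inv_gap (a := π*k) (b := π*((k:ℝ)+1/2)) (by positivity) (by nlinarith)
    have hfin : (π*((k:ℝ)+1/2) - π*k)/(2*(π*(k:ℝ))*Real.sqrt (π*k)) ≤ 1/((n:ℝ)*Real.sqrt n) := by
      have hs : Real.sqrt ((n:ℝ)) ≤ Real.sqrt (π*k) := by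
        apply Real.sqrt_le_sqrt; rw [hnr]; nlinarith
      have hs0 : (0:ℝ) < Real.sqrt (π*k) := Real.sqrt_pos.mpr (by positivity)
      have hs1 : (0:ℝ) < Real.sqrt n := Real.sqrt_pos.mpr hn0
      rw [hnr] at hs
      rw [div_le_div_iff₀ (by positivity) (by positivity)]
      have hnum : π*((k:ℝ)+1/2) - π*k = π/2 := by ring
      rw [hnum, hnr]
      nlinarith [mul_le_mul_of_nonneg_left hs (by positivity : (0:ℝ) ≤ π*(k:ℝ)),
        mul_nonneg (mul_nonneg hπ.le hk0.le) hs0.le]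
    calc Real.sqrt (1/(π*k)) - cbr k
        ≤ Real.sqrt (1/(π*k)) - Real.sqrt (1/(π*((k:ℝ)+1/2))) := by linarith
      _ ≤ (π*((k:ℝ)+1/2) - π*k)/(2*(π*(k:ℝ))*Real.sqrt (π*k)) := hgap
      _ ≤ 1/((n:ℝ)*Real.sqrt n) := hfin
  · -- odd, n = 2k+1
    have hnr : (n:ℝ) = 2*k+1 := by exact_mod_cast congrArg (Nat.cast : ℕ → ℝ) (by omega : n = 2*k+1)
    have heq : (aSum n : ℝ) = cbr (k+1) * 2^n := by
      rw [show n = 2*k+1 by omega]; exact odd_eq k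
    rw [heq]
    apply hred
    have hrad : (2:ℝ)/(π*n) = 1/(π*((k:ℝ)+1/2)) := by
      rw [hnr, div_eq_div_iff (by positivity) (by positivity)]; ring
    rw [hrad]
    have hup : cbr (k+1) ≤ Real.sqrt (1/(π*((k:ℝ)+1/2))) := by
      have h1 := cbr_upper (k := k+1) (by omega)
      push_cast at h1
      refine le_trans h1 (Real.sqrt_le_sqrt ?_)
      rw [div_le_div_iff₀ (by positivity) (by positivity)]
      nlinarith [Nat.cast_nonneg (α := ℝ) k]
    have hlo : Real.sqrt (1/(π*((k:ℝ)+1+1/2))) ≤ cbr (k+1) := by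
      have h1 := cbr_lower (k+1)
      push_cast at h1
      exact h1
    rw [abs_of_nonpos (by linarith), neg_sub]
    have hgap := sqrt_inv_gap (a := π*((k:ℝ)+1/2)) (b := π*((k:ℝ)+1+1/2)) (by positivity) (by nlinarith)
    have hfin : (π*((k:ℝ)+1+1/2) - π*((k:ℝ)+1/2))/(2*(π*((k:ℝ)+1/2))*Real.sqrt (π*((k:ℝ)+1/2)))
        ≤ 1/((n:ℝ)*Real.sqrt n) := by
      have hs : Real.sqrt ((n:ℝ)) ≤ Real.sqrt (π*((k:ℝ)+1/2)) := by
        apply Real.sqrt_le_sqrt; rw [hnr]; nlinarith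
      have hs0 : (0:ℝ) < Real.sqrt (π*((k:ℝ)+1/2)) := Real.sqrt_pos.mpr (by positivity)
      have hs1 : (0:ℝ) < Real.sqrt n := Real.sqrt_pos.mpr hn0
      rw [hnr] at hs
      rw [div_le_div_iff₀ (by positivity) (by positivity)]
      have hnum : π*((k:ℝ)+1+1/2) - π*((k:ℝ)+1/2) = π := by ring
      rw [hnum, hnr]
      nlinarith [mul_le_mul_of_nonneg_left hs (by positivity : (0:ℝ) ≤ π*(2*(k:ℝ)+1)),
        Nat.cast_nonneg (α := ℝ) k]
    calc Real.sqrt (1/(π*((k:ℝ)+1/2))) - cbr (k+1)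
        ≤ Real.sqrt (1/(π*((k:ℝ)+1/2))) - Real.sqrt (1/(π*((k:ℝ)+1+1/2))) := by linarith
      _ ≤ _ := hgap
      _ ≤ 1/((n:ℝ)*Real.sqrt n) := hfin

theorem part2 : Tendsto (fun n : ℕ =>
      (aSum n : ℝ) / (Real.sqrt (2 / Real.pi) * (n : ℝ) ^ (-(1 : ℝ)/2) * 2 ^ n))
    atTop (nhds 1) := by
  have hπ := Real.pi_pos
  set C0 : ℝ := (Real.sqrt (2/π))⁻¹ with hC0
  have h1 : Tendsto (fun n : ℕ =>
      (aSum n : ℝ) / (Real.sqrt (2/π) * (n:ℝ)^(-(1:ℝ)/2) * 2^n) - 1) atTop (nhds 0) := by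
    refine squeeze_zero_norm' ?_ (tendsto_const_div_atTop_nhds_zero_nat C0)
    filter_upwards [eventually_ge_atTop 1] with n hn
    have hn0 : (0:ℝ) < n := by exact_mod_cast hn
    have hT : (0:ℝ) < Real.sqrt (2/π) * (n:ℝ)^(-(1:ℝ)/2) * 2^n := by
      have := Real.rpow_pos_of_pos hn0 (-(1:ℝ)/2)
      have hs : (0:ℝ) < Real.sqrt (2/π) := Real.sqrt_pos.mpr (by positivity)
      positivity
    set T := Real.sqrt (2/π) * (n:ℝ)^(-(1:ℝ)/2) * 2^n with hTdef
    have hb := main_bound n hn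
    rw [Real.norm_eq_abs, show (aSum n : ℝ)/T - 1 = ((aSum n : ℝ) - T)/T by
      field_simp, abs_div, abs_of_pos hT]
    rw [div_le_div_iff₀ hT hn0]
    have hkey : (n:ℝ)^(-(3:ℝ)/2) * 2^n * n = C0 * T := by
      rw [hTdef, hC0]
      have e : (n:ℝ)^(-(3:ℝ)/2) = (n:ℝ)^(-(1:ℝ)/2) * (n:ℝ)^(-(1:ℝ)) := by
        rw [← Real.rpow_add hn0]; norm_num
      rw [e, Real.rpow_neg_one]
      have hs : (0:ℝ) < Real.sqrt (2/π) := Real.sqrt_pos.mpr (by positivity)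
      field_simp
    calc |(aSum n : ℝ) - T| * n ≤ ((n:ℝ)^(-(3:ℝ)/2) * 2^n) * n :=
          mul_le_mul_of_nonneg_right hb hn0.le
      _ = C0 * T := by rw [← hkey]
  have := h1.add_const 1
  simpa using this

/-- `|a(n) − √(2/π)·n^{-1/2}·2^n| ≤ C·n^{-3/2}·2^n` for all `n ≥ 1`;
in particular `a(n) ∼ √(2/π)·n^{-1/2}·2^n`. -/
theorem stmt2 :
    (∃ C : ℝ, 0 < C ∧ ∀ n : ℕ, 1 ≤ n →
      |(aSum n : ℝ) - Real.sqrt (2 / Real.pi) * (n : ℝ) ^ (-(1 : ℝ)/2) * 2 ^ n|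
        ≤ C * (n : ℝ) ^ (-(3 : ℝ)/2) * 2 ^ n) ∧
    Tendsto (fun n : ℕ =>
        (aSum n : ℝ) / (Real.sqrt (2 / Real.pi) * (n : ℝ) ^ (-(1 : ℝ)/2) * 2 ^ n))
      atTop (nhds 1) := by
  refine ⟨⟨1, one_pos, fun n hn => ?_⟩, part2⟩
  rw [one_mul]
  exact main_bound n hn
end

section
/- Let ℓ ≥ 3 be odd and let r be an integer with 0 ≤ r < ℓ. Then there exists a constant C > 0 such that for all n ≥ 1, |c(n,r) − a(n)/ℓ| ≤ C·n^{−3/2}·2^n; equivalently, c(n,r) = (a(n)/ℓ)·(1 + O(1/n)). -/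
open Filter Real

/-! ### Auxiliary lemmas -/

lemma aa_succ (n m : ℕ) : aa (n+1) m = aa n (m+1) + (if m = 0 then 0 else aa n (m-1)) := rfl

lemma aa_zero (m : ℕ) : aa 0 m = if m = 0 then 1 else 0 := rfl

lemma aa_eq_zero_of_gt : ∀ n m, n < m → aa n m = 0 := by
  intro n
  induction n with
  | zero => intro m hm; simp [aa]; omega
  | succ n ih =>
    intro m hm
    rw [aa_succ, ih (m+1) (by omega)]
    rcases Nat.eq_zero_or_pos m with h | h
    · simp [h]
    · simp [Nat.pos_iff_ne_zero.mp h, ih (m-1) (by omega)]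

lemma aa_self : ∀ n, aa n n = 1 := by
  intro n
  induction n with
  | zero => simp [aa]
  | succ n ih => rw [aa_succ, aa_eq_zero_of_gt n (n+2) (by omega)]; simp [ih]

lemma pascal (n k : ℕ) (hk : 1 ≤ k) :
    Nat.choose (n+1) k = Nat.choose n (k-1) + Nat.choose n k := by
  obtain ⟨j, rfl⟩ : ∃ j, k = j + 1 := ⟨k-1, by omega⟩
  simp [Nat.choose_succ_succ]

lemma aa_ballot : ∀ n k, 1 ≤ k → 2*k ≤ n →
    (aa n (n - 2*k) : ℤ) = Nat.choose n k - Nat.choose n (k-1) := by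
  intro n
  induction n with
  | zero => intro k h1 h2; omega
  | succ n ih =>
    intro k h1 h2
    rw [aa_succ]
    rcases Nat.eq_zero_or_pos (n + 1 - 2*k) with h0 | h0
    · -- n+1 = 2k
      have hn : n = 2*k - 1 := by omega
      rw [if_pos h0]
      have h11 : (n + 1 - 2*k) + 1 = n - 2*(k-1) := by omega
      rcases Nat.eq_or_lt_of_le h1 with h1' | h1'
      · -- k = 1, n = 1
        have hk : k = 1 := h1'.symm
        subst hk
        have hn1 : n = 1 := by omega
        subst hn1
        norm_num [aa_self]
      · have hk2 : 2 ≤ k := h1'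
        rw [h11]
        push_cast
        rw [ih (k-1) (by omega) (by omega)]
        have hsym : Nat.choose n k = Nat.choose n (k-1) := by
          have : n - k = k - 1 := by omega
          rw [← this, Nat.choose_symm (by omega)]
        rw [pascal n k h1, pascal n (k-1) (by omega)]
        have e2 : k - 1 - 1 = k - 2 := by omega
        rw [e2]
        push_cast
        rw [hsym]
        have e3 : (k:ℤ) - 1 - 1 = k - 2 := by ring
        omega
    · -- m ≥ 1
      rw [if_neg (by omega)]
      have hmo : 2*k ≤ n := by omega
      have h11 : (n + 1 - 2*k) + 1 = n - 2*(k-1) := by omega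
      have h12 : (n + 1 - 2*k) - 1 = n - 2*k := by omega
      rw [h11, h12, pascal n k h1]
      rcases Nat.eq_or_lt_of_le h1 with h1' | h1'
      · have hk : k = 1 := h1'.symm
        subst hk
        simp only [Nat.sub_self, Nat.mul_zero, Nat.sub_zero, aa_self]
        push_cast
        rw [ih 1 le_rfl hmo]
        push_cast
        simp [Nat.choose_one_right]
      · have hk2 : 2 ≤ k := h1'
        push_cast
        rw [ih k h1 hmo, ih (k-1) (by omega) (by omega)]
        rw [pascal n (k-1) (by omega)]
        have e2 : k - 1 - 1 = k - 2 := by omega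
        rw [e2]
        push_cast
        ring

lemma aa_parity : ∀ n m, (n + m) % 2 = 1 → aa n m = 0 := by
  intro n
  induction n with
  | zero => intro m hm; rw [aa_zero, if_neg (by omega)]
  | succ n ih =>
    intro m hm
    rw [aa_succ, ih (m+1) (by omega)]
    rcases Nat.eq_zero_or_pos m with h | h
    · simp [h]
    · simp [Nat.pos_iff_ne_zero.mp h, ih (m-1) (by omega)]

lemma centralBinom_sq_bound : ∀ t, (Nat.centralBinom t)^2 * (2*t+1) ≤ 2 * 16^t := by
  intro t
  induction t with
  | zero => simp [Nat.centralBinom]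
  | succ t ih =>
    have h := Nat.succ_mul_centralBinom_succ t
    have key : (t+1)^2 * ((Nat.centralBinom (t+1))^2 * (2*(t+1)+1)) ≤ (t+1)^2 * (2 * 16^(t+1)) := by
      have e : (t+1)^2 * ((Nat.centralBinom (t+1))^2 * (2*(t+1)+1)) =
          ((t+1) * Nat.centralBinom (t+1))^2 * (2*t+3) := by ring
      rw [e, h]
      have e2 : (2 * (2*t+1) * Nat.centralBinom t)^2 * (2*t+3) =
          ((Nat.centralBinom t)^2 * (2*t+1)) * (4 * (2*t+1) * (2*t+3)) := by ring
      rw [e2]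
      calc ((Nat.centralBinom t)^2 * (2*t+1)) * (4 * (2*t+1) * (2*t+3))
          ≤ (2 * 16^t) * (4 * (2*t+1) * (2*t+3)) := Nat.mul_le_mul_right _ ih
        _ ≤ (2 * 16^t) * (16 * (t+1)^2) := Nat.mul_le_mul_left _ (by nlinarith)
        _ = (t+1)^2 * (2 * 16^(t+1)) := by ring
    exact Nat.le_of_mul_le_mul_left key (by positivity)

lemma aa_two_mul_zero (t : ℕ) : (t+1) * aa (2*t) 0 = Nat.centralBinom t := by
  rcases Nat.eq_zero_or_pos t with h | h
  · subst h; simp [aa_zero, Nat.centralBinom]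
  · have hb := aa_ballot (2*t) t h (le_refl _)
    have e0 : 2*t - 2*t = 0 := by omega
    rw [e0] at hb
    have hsym : Nat.choose (2*t) t * t = Nat.choose (2*t) (t-1) * (t+1) := by
      have := Nat.choose_succ_right_eq (2*t) (t-1)
      have e1 : t - 1 + 1 = t := by omega
      have e2 : 2*t - (t-1) = t+1 := by omega
      rw [e1, e2] at this
      omega
    have : ((t:ℤ)+1) * aa (2*t) 0 = Nat.centralBinom t := by
      rw [hb]
      have hc : (Nat.choose (2*t) t : ℤ) * t = Nat.choose (2*t) (t-1) * (t+1) := by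
        exact_mod_cast hsym
      have : (Nat.centralBinom t : ℤ) = Nat.choose (2*t) t := by
        rw [Nat.centralBinom]
      rw [this]
      linarith
    exact_mod_cast this

lemma aa_zero_sq_bound (n : ℕ) : (aa n 0)^2 * (n+1)^3 ≤ 8 * 4^n := by
  rcases Nat.even_or_odd n with ⟨t, ht⟩ | ⟨t, ht⟩
  · subst ht
    have ht2 : t + t = 2*t := by ring
    rw [ht2]
    have h1 := aa_two_mul_zero t
    have h2 := centralBinom_sq_bound t
    have key : (aa (2*t) 0)^2 * ((t+1)^2 * (2*t+1)) ≤ 2 * 16^t := by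
      calc (aa (2*t) 0)^2 * ((t+1)^2 * (2*t+1)) = ((t+1) * aa (2*t) 0)^2 * (2*t+1) := by ring
        _ = (Nat.centralBinom t)^2 * (2*t+1) := by rw [h1]
        _ ≤ 2 * 16^t := h2
    calc (aa (2*t) 0)^2 * (2*t+1)^3 = (aa (2*t) 0)^2 * (2*t+1) * (2*t+1)^2 := by ring
      _ ≤ (aa (2*t) 0)^2 * (2*t+1) * (4 * (t+1)^2) := Nat.mul_le_mul_left _ (by nlinarith)
      _ = 4 * ((aa (2*t) 0)^2 * ((t+1)^2 * (2*t+1))) := by ring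
      _ ≤ 4 * (2 * 16^t) := Nat.mul_le_mul_left _ key
      _ = 8 * 16^t := by ring
      _ ≤ 8 * 4^(2*t) := by rw [pow_mul]; norm_num
  · have : aa n 0 = 0 := aa_parity n 0 (by omega)
    simp [this]

/-! ### The generating function `GG` -/

noncomputable def GG (z : ℂ) (n : ℕ) : ℂ := ∑ m ∈ Finset.range (n+1), (aa n m : ℂ) * z^m

lemma GG_zero (z : ℂ) : GG z 0 = 1 := by simp [GG, aa_zero]

lemma GG_rec (z : ℂ) (n : ℕ) :
    z * GG z (n+1) = (1 + z^2) * GG z n - (aa n 0 : ℂ) := by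
  have expand : ∀ m, (aa (n+1) m : ℂ) * z^m
      = (aa n (m+1) : ℂ) * z^m + (if m = 0 then 0 else (aa n (m-1) : ℂ)) * z^m := by
    intro m
    rw [aa_succ]
    rcases eq_or_ne m 0 with h | h <;> simp [h] <;> push_cast <;> ring
  have hsplit : GG z (n+1)
      = (∑ m ∈ Finset.range (n+2), (aa n (m+1) : ℂ) * z^m)
      + (∑ m ∈ Finset.range (n+2), (if m = 0 then 0 else (aa n (m-1) : ℂ)) * z^m) := by
    rw [GG, ← Finset.sum_add_distrib]
    exact Finset.sum_congr rfl (fun m _ => expand m)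
  have hA : z * (∑ m ∈ Finset.range (n+2), (aa n (m+1) : ℂ) * z^m)
      = GG z n - (aa n 0 : ℂ) := by
    have e1 : z * (∑ m ∈ Finset.range (n+2), (aa n (m+1) : ℂ) * z^m)
        = ∑ m ∈ Finset.range (n+2), (aa n (m+1) : ℂ) * z^(m+1) := by
      rw [Finset.mul_sum]
      exact Finset.sum_congr rfl (fun m _ => by ring)
    rw [e1]
    have e2 := Finset.sum_range_succ' (fun m => (aa n m : ℂ) * z^m) (n+2)
    have e3 : ∑ m ∈ Finset.range (n+3), (aa n m : ℂ) * z^m = GG z n := by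
      rw [Finset.sum_range_succ, Finset.sum_range_succ,
        aa_eq_zero_of_gt n (n+1) (by omega), aa_eq_zero_of_gt n (n+2) (by omega)]
      simp [GG]
    rw [e3] at e2
    simp only [pow_zero, mul_one] at e2
    have : ∑ m ∈ Finset.range (n+2), (aa n (m+1) : ℂ) * z^(m+1) = GG z n - (aa n 0 : ℂ) := by
      rw [eq_sub_iff_add_eq, ← e2]
    exact this
  have hB : ∑ m ∈ Finset.range (n+2), (if m = 0 then 0 else (aa n (m-1) : ℂ)) * z^m
      = z * GG z n := by
    have e2 := Finset.sum_range_succ'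
      (fun m => (if m = 0 then 0 else (aa n (m-1) : ℂ)) * z^m) (n+1)
    rw [e2]
    simp only [Nat.succ_ne_zero, if_false, Nat.add_sub_cancel, eq_self_iff_true, if_true,
      zero_mul, add_zero]
    rw [GG, Finset.mul_sum]
    exact Finset.sum_congr rfl (fun m _ => by ring)
  rw [hsplit, mul_add, hA, hB]
  ring

lemma aSum_cast (n : ℕ) : GG 1 n = (aSum n : ℂ) := by simp [GG, aSum]

lemma aSum_le_two_pow (n : ℕ) : aSum n ≤ 2^n := by
  induction n with
  | zero => simp [aSum, aa_zero]
  | succ n ih =>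
    have h := GG_rec 1 n
    rw [aSum_cast, aSum_cast, one_mul] at h
    norm_num at h
    have hle : aa n 0 ≤ aSum n :=
      Finset.single_le_sum (f := fun m => aa n m) (fun _ _ => Nat.zero_le _) (by simp)
    have hnat : aSum (n+1) + aa n 0 = 2 * aSum n := by
      have : ((aSum (n+1) : ℕ) + (aa n 0 : ℕ) : ℂ) = ((2 * aSum n : ℕ) : ℂ) := by
        push_cast
        rw [h]; ring
      exact_mod_cast this
    omega

lemma GG_le_two_pow (z : ℂ) (hz : ‖z‖ = 1) (n : ℕ) : ‖GG z n‖ ≤ 2^n := by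
  calc ‖GG z n‖ ≤ ∑ m ∈ Finset.range (n+1), ‖(aa n m : ℂ) * z^m‖ := norm_sum_le _ _
    _ = ∑ m ∈ Finset.range (n+1), (aa n m : ℝ) := by
        refine Finset.sum_congr rfl (fun m _ => ?_)
        rw [norm_mul, norm_pow, hz, one_pow, mul_one, Complex.norm_natCast]
    _ = ((aSum n : ℕ) : ℝ) := by rw [aSum]; push_cast; rfl
    _ ≤ ((2^n : ℕ) : ℝ) := by exact_mod_cast aSum_le_two_pow n
    _ = 2^n := by push_cast; rfl

lemma aa_zero_real_bound (n : ℕ) : (aa n 0 : ℝ) ≤ 3 * 2^n / Real.sqrt (((n:ℝ)+1)^3) := by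
  have hx : (0:ℝ) < Real.sqrt (((n:ℝ)+1)^3) := by positivity
  rw [le_div_iff₀ hx]
  have hsq : ((aa n 0 : ℝ) * Real.sqrt (((n:ℝ)+1)^3))^2 ≤ (3 * 2^n)^2 := by
    have h := aa_zero_sq_bound n
    have h' : ((aa n 0)^2 * (n+1)^3 : ℝ) ≤ 8 * 4^n := by exact_mod_cast h
    rw [mul_pow, Real.sq_sqrt (by positivity)]
    calc ((aa n 0 : ℝ))^2 * ((n:ℝ)+1)^3 ≤ 8 * 4^n := by push_cast at h' ⊢; linarith
      _ ≤ 9 * 4^n := by nlinarith [pow_pos (by norm_num : (0:ℝ) < 4) n]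
      _ = (3 * 2^n)^2 := by
          rw [mul_pow, ← pow_mul, mul_comm n 2, pow_mul]
          norm_num
  have h1 : (0:ℝ) ≤ (aa n 0 : ℝ) * Real.sqrt (((n:ℝ)+1)^3) := by positivity
  have h2 : (0:ℝ) ≤ 3 * 2^n := by positivity
  nlinarith

/-! ### Decay of `GG` at roots of unity -/

lemma GG_decay (lam : ℝ) (hl0 : 0 ≤ lam) (hl2 : lam < 2) :
    ∃ C : ℝ, 0 < C ∧ ∀ z : ℂ, ‖z‖ = 1 → ‖1 + z^2‖ ≤ lam →
      ∀ n : ℕ, ‖GG z n‖ ≤ C * 2^n / Real.sqrt (((n:ℝ)+1)^3) := by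
  set ρ : ℝ := 4 / (lam + 2) with hρ
  have hρ1 : 1 < ρ := by rw [hρ, lt_div_iff₀ (by linarith)]; linarith
  have hρdef : ρ * (lam + 2) = 4 := by rw [hρ]; field_simp
  obtain ⟨N, hN⟩ := exists_nat_ge (7 / (ρ^2 - 1))
  have hρsq : 0 < ρ^2 - 1 := by nlinarith
  have hN7 : 7 ≤ (ρ^2 - 1) * ((N:ℝ)) := by
    rw [div_le_iff₀ hρsq] at hN; linarith
  clear_value ρ
  set C : ℝ := max (Real.sqrt (((N:ℝ)+1)^3)) (6 / (2 - lam)) with hC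
  have hCpos : 0 < C := lt_of_lt_of_le (by positivity) (le_max_left _ _)
  have hC1 : Real.sqrt (((N:ℝ)+1)^3) ≤ C := le_max_left _ _
  have hC2 : 6 / (2 - lam) ≤ C := le_max_right _ _
  have hC2' : 6 ≤ C * (2 - lam) := by
    rw [div_le_iff₀ (by linarith)] at hC2; linarith
  clear_value C
  have hAρ : (lam * C + 3) * ρ ≤ 2 * C := by
    have h4 : (lam * C + 3) * 4 ≤ 2 * C * (lam + 2) := by nlinarith [hC2']
    have hpos : (0:ℝ) < lam + 2 := by linarith
    calc (lam * C + 3) * ρ = (lam * C + 3) * 4 / (lam + 2) := by rw [hρ]; ring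
      _ ≤ 2 * C * (lam + 2) / (lam + 2) := by gcongr
      _ = 2 * C := by field_simp
  refine ⟨C, hCpos, fun z hz hzl => ?_⟩
  have hstep : ∀ n : ℕ, ‖GG z (n+1)‖ ≤ lam * ‖GG z n‖ + (aa n 0 : ℝ) := by
    intro n
    have h1 : ‖GG z (n+1)‖ = ‖(1 + z^2) * GG z n - (aa n 0 : ℂ)‖ := by
      rw [← GG_rec z n, norm_mul, hz, one_mul]
    rw [h1]
    calc ‖(1 + z^2) * GG z n - (aa n 0 : ℂ)‖
        ≤ ‖(1 + z^2) * GG z n‖ + ‖(aa n 0 : ℂ)‖ := norm_sub_le _ _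
      _ ≤ lam * ‖GG z n‖ + (aa n 0 : ℝ) := by
          rw [norm_mul, Complex.norm_natCast]
          gcongr
  intro n
  induction n with
  | zero =>
    rw [GG_zero]
    have h1 : (1:ℝ) ≤ C := by
      refine le_trans ?_ hC1
      have h := Real.sqrt_le_sqrt (show (1:ℝ) ≤ ((N:ℝ)+1)^3 from
        one_le_pow₀ (by nlinarith [Nat.cast_nonneg (α := ℝ) N]))
      rwa [Real.sqrt_one] at h
    simp only [norm_one, pow_zero, mul_one, Nat.cast_zero]
    rw [le_div_iff₀ (by positivity)]
    norm_num
    exact h1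
  | succ n ih =>
    by_cases hn : n + 1 ≤ N
    · -- crude bound
      have hcr := GG_le_two_pow z hz (n+1)
      have hcast : ((((n+1:ℕ)):ℝ)+1) = ((n:ℝ)+2) := by push_cast; ring
      have hle : ((n:ℝ)+2) ≤ ((N:ℝ)+1) := by
        have : ((n:ℝ)+1) ≤ (N:ℝ) := by exact_mod_cast hn
        linarith
      have hsqle : Real.sqrt (((n:ℝ)+2)^3) ≤ C :=
        le_trans (Real.sqrt_le_sqrt (pow_le_pow_left₀ (by positivity) hle 3)) hC1
      rw [hcast, le_div_iff₀ (by positivity)]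
      calc ‖GG z (n+1)‖ * Real.sqrt (((n:ℝ)+2)^3)
          ≤ 2^(n+1) * Real.sqrt (((n:ℝ)+2)^3) := by
            exact mul_le_mul_of_nonneg_right hcr (Real.sqrt_nonneg _)
        _ ≤ 2^(n+1) * C := by
            exact mul_le_mul_of_nonneg_left hsqle (by positivity)
        _ = C * 2^(n+1) := by ring
    · push_neg at hn
      have hnN : (N:ℝ) ≤ (n:ℝ) := by exact_mod_cast Nat.le_of_lt_succ (by omega)
      have hx : (0:ℝ) < Real.sqrt (((n:ℝ)+1)^3) := by positivity
      have hy : (0:ℝ) < Real.sqrt (((((n+1:ℕ)):ℝ)+1)^3) := by positivity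
      have hchain : ‖GG z (n+1)‖ ≤ (lam * C + 3) * 2^n / Real.sqrt (((n:ℝ)+1)^3) := by
        calc ‖GG z (n+1)‖ ≤ lam * ‖GG z n‖ + (aa n 0 : ℝ) := hstep n
          _ ≤ lam * (C * 2^n / Real.sqrt (((n:ℝ)+1)^3))
              + 3 * 2^n / Real.sqrt (((n:ℝ)+1)^3) := by
              gcongr
              exact aa_zero_real_bound n
          _ = (lam * C + 3) * 2^n / Real.sqrt (((n:ℝ)+1)^3) := by ring
      refine le_trans hchain ?_
      have h7 : 7 ≤ (ρ^2 - 1) * ((n:ℝ)+1) := by nlinarith [Nat.cast_nonneg (α := ℝ) n]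
      have h8 : 7 * ((n:ℝ)+1)^2 ≤ (ρ^2 - 1) * ((n:ℝ)+1)^3 := by
        nlinarith [sq_nonneg ((n:ℝ)+1), Nat.cast_nonneg (α := ℝ) n]
      have hcube : (((n:ℝ)+2))^3 ≤ ρ^2 * (((n:ℝ)+1))^3 := by
        nlinarith [h8, Nat.cast_nonneg (α := ℝ) n]
      have hsy : Real.sqrt ((((n:ℝ)+2))^3) ≤ ρ * Real.sqrt (((n:ℝ)+1)^3) := by
        rw [show ρ * Real.sqrt (((n:ℝ)+1)^3) = Real.sqrt (ρ^2 * (((n:ℝ)+1))^3) by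
          rw [Real.sqrt_mul (by positivity), Real.sqrt_sq (by linarith)]]
        exact Real.sqrt_le_sqrt hcube
      have hcast : ((((n+1:ℕ)):ℝ)+1) = ((n:ℝ)+2) := by push_cast; ring
      rw [hcast]
      rw [div_le_div_iff₀ hx (by positivity)]
      calc (lam * C + 3) * 2^n * Real.sqrt (((n:ℝ)+2)^3)
          ≤ (lam * C + 3) * 2^n * (ρ * Real.sqrt (((n:ℝ)+1)^3)) := by
            gcongr
          _ = ((lam * C + 3) * ρ) * 2^n * Real.sqrt (((n:ℝ)+1)^3) := by ring
          _ ≤ (2 * C) * 2^n * Real.sqrt (((n:ℝ)+1)^3) := by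
            gcongr
          _ = C * 2^(n+1) * Real.sqrt (((n:ℝ)+1)^3) := by ring

/-! ### Roots of unity -/

lemma norm_one_add_lt_two (w : ℂ) (hw : ‖w‖ = 1) (hne : w ≠ 1) : ‖1 + w‖ < 2 := by
  have hsq : ‖w‖^2 = w.re^2 + w.im^2 := by
    rw [Complex.sq_norm, Complex.normSq_apply]; ring
  have h1 : w.re^2 + w.im^2 = 1 := by rw [← hsq, hw]; norm_num
  have hre : w.re < 1 := by
    rcases lt_or_eq_of_le (Complex.re_le_norm w) with h | h
    · calc w.re < ‖w‖ := h
        _ = 1 := hw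
    · exfalso
      apply hne
      have hre1 : w.re = 1 := by rw [h]; exact hw
      have him : w.im = 0 := by nlinarith
      exact Complex.ext hre1 him
  have h2 : ‖1 + w‖^2 = 2 + 2 * w.re := by
    rw [Complex.sq_norm, Complex.normSq_apply]
    simp only [Complex.add_re, Complex.add_im, Complex.one_re, Complex.one_im]
    nlinarith
  nlinarith [norm_nonneg (1 + w)]

lemma dvd_iff_mod (ℓ : ℕ) (r m : ℕ) (hr : r < ℓ) (hl : 0 < ℓ) :
    ℓ ∣ (ℓ - r + m) ↔ m % ℓ = r := by
  constructor
  · rintro ⟨k, hk⟩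
    have hm := Nat.mod_add_div m ℓ
    set a := m % ℓ with ha
    have halt : a < ℓ := Nat.mod_lt _ hl
    set q := m / ℓ with hq
    have : ℓ - r + a + ℓ * q = ℓ * k := by omega
    have hkq : k ≥ q + 1 ∨ k ≤ q + 1 := by omega
    have h2 : ℓ - r + a = ℓ * (k - q) := by
      rcases le_or_gt k q with h | h
      · exfalso
        have : ℓ * k ≤ ℓ * q := Nat.mul_le_mul_left _ h
        omega
      · have : ℓ * k = ℓ * (k - q) + ℓ * q := by
          rw [← Nat.mul_add]
          congr 1
          omega
        omega
    have hk1 : k - q = 1 := by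
      rcases Nat.lt_or_ge (k - q) 2 with h | h
      · interval_cases h' : k - q <;> omega
      · exfalso
        have : ℓ * 2 ≤ ℓ * (k - q) := Nat.mul_le_mul_left _ h
        omega
    rw [hk1, Nat.mul_one] at h2
    omega
  · intro h
    refine ⟨1 + m / ℓ, ?_⟩
    have hm := Nat.mod_add_div m ℓ
    rw [h] at hm
    rw [Nat.mul_add, Nat.mul_one]
    omega

lemma rou_sum {ℓ : ℕ} (hl : ℓ ≠ 0) (ζ : ℂ) (hprim : IsPrimitiveRoot ζ ℓ) (s : ℕ) :
    ∑ j ∈ Finset.range ℓ, (ζ^s)^j = if ℓ ∣ s then (ℓ:ℂ) else 0 := by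
  by_cases h : ℓ ∣ s
  · rw [if_pos h, (hprim.pow_eq_one_iff_dvd s).mpr h]
    simp
  · rw [if_neg h]
    have hne : ζ^s ≠ 1 := fun hc => h ((hprim.pow_eq_one_iff_dvd s).mp hc)
    rw [geom_sum_eq hne]
    have : (ζ^s)^ℓ = 1 := by
      rw [← pow_mul, mul_comm, pow_mul, hprim.pow_eq_one, one_pow]
    rw [this]
    simp

lemma fourier_inversion {ℓ : ℕ} (hl : 0 < ℓ) (ζ : ℂ) (hprim : IsPrimitiveRoot ζ ℓ)
    (r : ℕ) (hr : r < ℓ) (n : ℕ) :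
    ∑ j ∈ Finset.range ℓ, (ζ^(ℓ-r))^j * GG (ζ^j) n = (ℓ:ℂ) * (cc ℓ n r : ℂ) := by
  have key : ∀ s j, (ζ^s)^j * GG (ζ^j) n
      = ∑ m ∈ Finset.range (n+1), (aa n m : ℂ) * (ζ^(s+m))^j := by
    intro s j
    rw [GG, Finset.mul_sum]
    refine Finset.sum_congr rfl (fun m _ => ?_)
    rw [← pow_mul, ← pow_mul, ← pow_mul, show (s+m)*j = s*j + j*m by ring, pow_add]
    ring
  calc ∑ j ∈ Finset.range ℓ, (ζ^(ℓ-r))^j * GG (ζ^j) n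
      = ∑ j ∈ Finset.range ℓ, ∑ m ∈ Finset.range (n+1), (aa n m : ℂ) * (ζ^(ℓ-r+m))^j := by
        exact Finset.sum_congr rfl (fun j _ => key (ℓ-r) j)
    _ = ∑ m ∈ Finset.range (n+1), ∑ j ∈ Finset.range ℓ, (aa n m : ℂ) * (ζ^(ℓ-r+m))^j :=
        Finset.sum_comm
    _ = ∑ m ∈ Finset.range (n+1), (aa n m : ℂ) * (if ℓ ∣ (ℓ-r+m) then (ℓ:ℂ) else 0) := by
        refine Finset.sum_congr rfl (fun m _ => ?_)
        rw [← Finset.mul_sum, rou_sum hl.ne' ζ hprim]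
    _ = (ℓ:ℂ) * (cc ℓ n r : ℂ) := by
        rw [cc]
        push_cast
        rw [Finset.mul_sum]
        refine Finset.sum_congr rfl (fun m _ => ?_)
        by_cases h : m % ℓ = r
        · rw [if_pos h, if_pos ((dvd_iff_mod ℓ r m hr hl).mpr h)]; ring
        · rw [if_neg h, if_neg (fun hc => h ((dvd_iff_mod ℓ r m hr hl).mp hc))]; ring

/-- For odd `ℓ ≥ 3` and `0 ≤ r < ℓ`:
`|c(n,r) − a(n)/ℓ| ≤ C·n^{-3/2}·2^n` for all `n ≥ 1`. -/
theorem stmt3 (ℓ : ℕ) (hℓ : 3 ≤ ℓ) (hodd : Odd ℓ) (r : ℕ) (hr : r < ℓ) :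
    ∃ C : ℝ, 0 < C ∧ ∀ n : ℕ, 1 ≤ n →
      |(cc ℓ n r : ℝ) - (aSum n : ℝ) / ℓ| ≤ C * (n : ℝ) ^ (-(3 : ℝ)/2) * 2 ^ n := by
  have hl0 : 0 < ℓ := by omega
  set ζ : ℂ := Complex.exp (2 * Real.pi * Complex.I / ℓ) with hζ
  have hprim : IsPrimitiveRoot ζ ℓ := Complex.isPrimitiveRoot_exp ℓ (by omega)
  have hnζ : ‖ζ‖ = 1 := by
    rw [hζ, show (2 * (Real.pi:ℂ) * Complex.I / ℓ) = ((2 * Real.pi / ℓ : ℝ) : ℂ) * Complex.I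
      by push_cast; ring]
    exact Complex.norm_exp_ofReal_mul_I _
  have hnζj : ∀ j : ℕ, ‖ζ^j‖ = 1 := fun j => by rw [norm_pow, hnζ, one_pow]
  have hS : (Finset.Ico 1 ℓ).Nonempty := ⟨1, by simp; omega⟩
  set lam : ℝ := (Finset.Ico 1 ℓ).sup' hS (fun j => ‖1 + (ζ^j)^2‖) with hlam
  have hsq_ne : ∀ j ∈ Finset.Ico 1 ℓ, (ζ^j)^2 ≠ 1 := by
    intro j hj hc
    rw [← pow_mul] at hc
    have hdvd : ℓ ∣ j * 2 := (hprim.pow_eq_one_iff_dvd (j*2)).mp hc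
    have : ℓ ∣ j := (Nat.Coprime.dvd_of_dvd_mul_right (Nat.coprime_two_right.mpr hodd)) hdvd
    rw [Finset.mem_Ico] at hj
    have := Nat.le_of_dvd (by omega) this
    omega
  have hlam2 : lam < 2 := by
    rw [hlam, Finset.sup'_lt_iff]
    intro j hj
    exact norm_one_add_lt_two _ (by rw [norm_pow, hnζj, one_pow]) (hsq_ne j hj)
  have hlam0 : 0 ≤ lam := le_trans (norm_nonneg _)
    (Finset.le_sup' (f := fun j => ‖1 + (ζ^j)^2‖) (Finset.mem_Ico.mpr ⟨le_refl 1, by omega⟩))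
  obtain ⟨C, hCpos, hCbd⟩ := GG_decay lam hlam0 hlam2
  refine ⟨C, hCpos, ?_⟩
  intro n hn
  have hinv := fourier_inversion hl0 ζ hprim r hr n
  rw [Finset.range_eq_Ico, Finset.sum_eq_sum_Ico_succ_bot hl0] at hinv
  rw [pow_zero, pow_zero, one_mul, aSum_cast] at hinv
  have hkey : ∑ j ∈ Finset.Ico 1 ℓ, (ζ^(ℓ-r))^j * GG (ζ^j) n
      = (ℓ:ℂ) * (cc ℓ n r : ℂ) - (aSum n : ℂ) := by
    rw [← hinv]; ring
  have hsum_bd : ‖∑ j ∈ Finset.Ico 1 ℓ, (ζ^(ℓ-r))^j * GG (ζ^j) n‖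
      ≤ (ℓ:ℝ) * (C * 2^n / Real.sqrt (((n:ℝ)+1)^3)) := by
    calc ‖∑ j ∈ Finset.Ico 1 ℓ, (ζ^(ℓ-r))^j * GG (ζ^j) n‖
        ≤ ∑ j ∈ Finset.Ico 1 ℓ, ‖(ζ^(ℓ-r))^j * GG (ζ^j) n‖ := norm_sum_le _ _
      _ ≤ ∑ j ∈ Finset.Ico 1 ℓ, (C * 2^n / Real.sqrt (((n:ℝ)+1)^3)) := by
          refine Finset.sum_le_sum (fun j hj => ?_)
          rw [norm_mul, norm_pow, hnζj, one_pow, one_mul]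
          exact hCbd (ζ^j) (hnζj j)
            (Finset.le_sup' (f := fun j => ‖1 + (ζ^j)^2‖) hj) n
      _ = ((Finset.Ico 1 ℓ).card : ℝ) * (C * 2^n / Real.sqrt (((n:ℝ)+1)^3)) := by
          rw [Finset.sum_const, nsmul_eq_mul]
      _ ≤ (ℓ:ℝ) * (C * 2^n / Real.sqrt (((n:ℝ)+1)^3)) := by
          have : (Finset.Ico 1 ℓ).card ≤ ℓ := by rw [Nat.card_Ico]; omega
          have hpos : (0:ℝ) ≤ C * 2^n / Real.sqrt (((n:ℝ)+1)^3) := by positivity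
          exact mul_le_mul_of_nonneg_right (by exact_mod_cast this) hpos
  rw [hkey] at hsum_bd
  have hre : ‖(ℓ:ℂ) * (cc ℓ n r : ℂ) - (aSum n : ℂ)‖
      = |(ℓ:ℝ) * (cc ℓ n r : ℝ) - (aSum n : ℝ)| := by
    rw [show (ℓ:ℂ) * (cc ℓ n r : ℂ) - (aSum n : ℂ)
        = (((ℓ:ℝ) * (cc ℓ n r : ℝ) - (aSum n : ℝ) : ℝ) : ℂ) by push_cast; ring]
    rw [Complex.norm_real, Real.norm_eq_abs]
  rw [hre] at hsum_bd
  have hl : (0:ℝ) < ℓ := by exact_mod_cast hl0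
  have hdiff : |(cc ℓ n r : ℝ) - (aSum n : ℝ) / ℓ|
      = |(ℓ:ℝ) * (cc ℓ n r : ℝ) - (aSum n : ℝ)| / ℓ := by
    rw [show (cc ℓ n r : ℝ) - (aSum n : ℝ) / ℓ
        = ((ℓ:ℝ) * (cc ℓ n r : ℝ) - (aSum n : ℝ)) / ℓ by field_simp]
    rw [abs_div, abs_of_pos hl]
  rw [hdiff]
  have hstep1 : |(ℓ:ℝ) * (cc ℓ n r : ℝ) - (aSum n : ℝ)| / ℓ
      ≤ C * 2^n / Real.sqrt (((n:ℝ)+1)^3) := by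
    rw [div_le_iff₀ hl]
    calc |(ℓ:ℝ) * (cc ℓ n r : ℝ) - (aSum n : ℝ)|
        ≤ (ℓ:ℝ) * (C * 2^n / Real.sqrt (((n:ℝ)+1)^3)) := hsum_bd
      _ = C * 2^n / Real.sqrt (((n:ℝ)+1)^3) * ℓ := by ring
  refine le_trans hstep1 ?_
  have hn1 : (1:ℝ) ≤ (n:ℝ) := by exact_mod_cast hn
  have hrpow : (n:ℝ) ^ (-(3:ℝ)/2) = (Real.sqrt ((n:ℝ)^3))⁻¹ := by
    rw [show -(3:ℝ)/2 = -((3:ℝ)/2) by ring, Real.rpow_neg (by linarith)]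
    congr 1
    rw [show (3:ℝ)/2 = (3:ℝ) * (1/2) by ring, Real.rpow_mul (by linarith),
      show (3:ℝ) = ((3:ℕ):ℝ) by norm_num, Real.rpow_natCast, ← Real.sqrt_eq_rpow]
  rw [hrpow]
  have hsqrt_le : Real.sqrt ((n:ℝ)^3) ≤ Real.sqrt (((n:ℝ)+1)^3) :=
    Real.sqrt_le_sqrt (by nlinarith)
  have hs_pos : (0:ℝ) < Real.sqrt ((n:ℝ)^3) := Real.sqrt_pos.mpr (by positivity)
  calc C * 2^n / Real.sqrt (((n:ℝ)+1)^3) ≤ C * 2^n / Real.sqrt ((n:ℝ)^3) := by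
        apply div_le_div_of_nonneg_left (by positivity) hs_pos hsqrt_le
    _ = C * (Real.sqrt ((n:ℝ)^3))⁻¹ * 2^n := by ring
end

section
/- Let ℓ ≥ 2 be even and let r be an integer with 0 ≤ r < ℓ. Then there exists a constant C > 0 such that for all n ≥ 1 with r ≡ n (mod 2), |c(n,r) − 2·a(n)/ℓ| ≤ C·n^{−3/2}·2^n; equivalently, along such n, c(n,r) = (2a(n)/ℓ)·(1 + O(1/n)). -/
open Filter Real

/-!
Counting paths by their last step shows `a(n,m) = H(k) := C(n,k) - C(n,k+1)` for `2k = n + m`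
(ballot numbers). Write `ℓ = 2d`. For `r ≡ n (mod 2)` the class sum `c(n,r)` samples `H` along the
progression `k₀ + jd`, `2k₀ = n + r`, so `c(n,r) - c(n,r+2)` samples `G := H - H(· + 1)` there.
`d` times this sample differs from the full sum `∑_{k ≥ k₀} G(k) = H(k₀) = O(d 2^n n^{-3/2})` by
at most `d` times the total variation of `G`, the `ℓ¹`-norm of the third differences of the
binomial row beyond its middle. Since `(k+1)(k+2)(k+3) Δ³C(n,k) = C(n,k) Q(2k - n)` with `Q`
cubic, the moments `∑ C(n,i) (2i-n)² = n 2^n` and `∑ C(n,i) (2i-n)⁴ = n(3n-2) 2^n` bound this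
norm by `O(2^n n^{-3/2})`. Hence neighbouring classes differ by `O(2^n n^{-3/2})`, and since the
`d` classes of the parity of `n` add up to `a(n)`, each is within `O(d 2^n n^{-3/2})` of `a(n)/d`.
-/

open Finset

def ballot (n k : ℕ) : ℝ := n.choose k - n.choose (k + 1)

theorem ballot_eq_zero_of_lt {n k : ℕ} (h : n < k) : ballot n k = 0 := by
  simp [ballot, Nat.choose_eq_zero_of_lt h, Nat.choose_eq_zero_of_lt (h.trans k.lt_succ_self)]

theorem ballot_succ_succ (n k : ℕ) : ballot (n + 1) (k + 1) = ballot n k + ballot n (k + 1) := by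
  simp only [ballot, Nat.choose_succ_succ, Nat.cast_add]
  ring

theorem ballot_two_mul_add_one_self (t : ℕ) : ballot (2 * t + 1) t = 0 := by
  rw [ballot, Nat.choose_symm_half, sub_self]

theorem aa_eq_ballot (n m : ℕ) :
    (aa n m : ℝ) = if (n + m) % 2 = 0 then ballot n ((n + m) / 2) else 0 := by
  induction n generalizing m with
  | zero =>
    rcases m with _ | m
    · simp [aa, ballot]
    · split_ifs with h
      · rw [ballot_eq_zero_of_lt (by omega)]
        simp [aa]
      · simp [aa]
  | succ n ih =>
    rcases m with _ | m
    · simp only [aa, if_true, add_zero, ih 1]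
      rcases Nat.even_or_odd' n with ⟨t, rfl | rfl⟩
      · simp [show (2 * t + 1) % 2 = 1 by omega]
      · rw [if_pos (by omega), if_pos (by omega), show (2 * t + 1 + 1) / 2 = t + 1 by omega,
          ballot_succ_succ (2 * t + 1), ballot_two_mul_add_one_self, zero_add]
    · simp only [aa, Nat.succ_ne_zero, if_false, Nat.add_sub_cancel, Nat.cast_add, ih]
      rcases Nat.even_or_odd' (n + m) with ⟨K, hK | hK⟩
      · rw [if_pos (by omega), if_pos (by omega), if_pos (by omega),
          show (n + (m + 1 + 1)) / 2 = K + 1 by omega, show (n + m) / 2 = K by omega,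
          show (n + 1 + (m + 1)) / 2 = K + 1 by omega, ballot_succ_succ, add_comm]
      · simp [show (n + (m + 1 + 1)) % 2 = 1 by omega, show (n + m) % 2 = 1 by omega,
          show (n + 1 + (m + 1)) % 2 = 1 by omega]

theorem aa_eq_zero_of_odd {n m : ℕ} (h : (n + m) % 2 = 1) : aa n m = 0 := by
  have := aa_eq_ballot n m
  rw [if_neg (by omega)] at this
  exact_mod_cast this

theorem aa_eq_zero_of_lt {n m : ℕ} (h : n < m) : aa n m = 0 := by
  have := aa_eq_ballot n m
  split_ifs at this
  · rw [ballot_eq_zero_of_lt (by omega)] at this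
    exact_mod_cast this
  · exact_mod_cast this

theorem sum_range_mul_eq_sum_sum {M : Type*} [AddCommMonoid M] (f : ℕ → M) (J d : ℕ) :
    ∑ k ∈ range (J * d), f k = ∑ j ∈ range J, ∑ s ∈ range d, f (j * d + s) := by
  induction J with
  | zero => simp
  | succ J ih => rw [sum_range_succ, ← ih, Nat.succ_mul, sum_range_add]

theorem cc_eq_sum_ballot {d n r : ℕ} (hr : r < 2 * d) (hpar : (n + r) % 2 = 0) :
    (cc (2 * d) n r : ℝ) = ∑ j ∈ range (n + 1), ballot n ((n + r) / 2 + j * d) := by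
  have hvanish : ∀ m ∈ range ((n + 1) * (2 * d)), m ∉ range (n + 1) →
      (if m % (2 * d) = r then (aa n m : ℝ) else 0) = 0 := fun m _ hm => by
    simp [aa_eq_zero_of_lt (show n < m by simpa using hm)]
  rw [cc]
  push_cast
  rw [sum_subset (range_subset_range.mpr (Nat.le_mul_of_pos_right _
    (by omega))) hvanish, sum_range_mul_eq_sum_sum]
  refine sum_congr rfl fun j _ => ?_
  have hjd : j * (2 * d) = 2 * (j * d) := by ring
  rw [sum_eq_single_of_mem r (mem_range.mpr hr)
    fun s hs hsr => if_neg (by rwa [Nat.mul_add_mod_of_lt (mem_range.mp hs)]),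
    if_pos (Nat.mul_add_mod_of_lt hr), aa_eq_ballot, if_pos (by omega)]
  congr 1
  omega

theorem sum_cc_eq_aSum {d : ℕ} (n : ℕ) (hd : 0 < d) :
    ∑ i ∈ range d, cc (2 * d) n (n % 2 + 2 * i) = aSum n := by
  rw [aSum]
  unfold cc
  rw [sum_comm]
  refine sum_congr rfl fun m _ => ?_
  by_cases hpar : (n + m) % 2 = 0
  · have hmod : m % (2 * d) % 2 = m % 2 := Nat.mod_mod_of_dvd m ⟨d, rfl⟩
    have hlt : m % (2 * d) < 2 * d := Nat.mod_lt _ (by omega)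
    rw [sum_eq_single_of_mem ((m % (2 * d) - n % 2) / 2) (mem_range.mpr (by omega))
      fun i _ hi => if_neg (by omega), if_pos (by omega)]
  · simp [aa_eq_zero_of_odd (show (n + m) % 2 = 1 by omega)]

theorem norm_nsmul_sum_sub_sum_le {E : Type*} [SeminormedAddCommGroup E] (G : ℕ → E)
    (a d J : ℕ) :
    ‖d • ∑ j ∈ range J, G (a + j * d) - ∑ k ∈ range (J * d), G (a + k)‖
      ≤ d * ∑ k ∈ range (J * d), ‖G (a + k) - G (a + k + 1)‖ := by
  have hblock : ∀ j, ‖d • G (a + j * d) - ∑ s ∈ range d, G (a + (j * d + s))‖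
      ≤ d * ∑ s ∈ range d, ‖G (a + (j * d + s)) - G (a + (j * d + s) + 1)‖ := fun j => by
    rw [show d • G (a + j * d) = ∑ _s ∈ range d, G (a + j * d) by simp, ← sum_sub_distrib,
      show ∀ x : ℝ, (d : ℝ) * x = ∑ _s ∈ range d, x by simp]
    refine (norm_sum_le _ _).trans (sum_le_sum fun s hs => ?_)
    calc ‖G (a + j * d) - G (a + (j * d + s))‖
        ≤ ∑ i ∈ range s, ‖G (a + j * d + i) - G (a + j * d + i + 1)‖ := by
          simpa [dist_eq_norm, add_assoc] using
            dist_le_range_sum_dist (fun i => G (a + j * d + i)) s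
      _ ≤ ∑ i ∈ range d, ‖G (a + (j * d + i)) - G (a + (j * d + i) + 1)‖ := by
          simp only [← add_assoc]
          exact sum_le_sum_of_subset_of_nonneg (range_subset_range.mpr (mem_range.mp hs).le)
            fun _ _ _ => norm_nonneg _
  rw [sum_range_mul_eq_sum_sum (fun k => G (a + k)), sum_range_mul_eq_sum_sum, smul_sum,
    ← sum_sub_distrib, mul_sum]
  exact (norm_sum_le _ _).trans (sum_le_sum fun j _ => hblock j)

theorem centralBinom_sq_mul_le (m : ℕ) : m.centralBinom ^ 2 * (2 * m + 1) ≤ 16 ^ m := by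
  induction m with
  | zero => simp
  | succ m ih =>
    have hrec := Nat.succ_mul_centralBinom_succ m
    have key : (m + 1) ^ 2 * ((m + 1).centralBinom ^ 2 * (2 * (m + 1) + 1))
        = 4 * (2 * m + 1) * (2 * m + 3) * (m.centralBinom ^ 2 * (2 * m + 1)) := by
      rw [show ∀ x y : ℕ, (m + 1) ^ 2 * (y ^ 2 * x) = ((m + 1) * y) ^ 2 * x by intros; ring,
        hrec]
      ring
    refine Nat.le_of_mul_le_mul_left (c := (m + 1) ^ 2) ?_ (by positivity)
    rw [key, pow_succ]
    calc 4 * (2 * m + 1) * (2 * m + 3) * (m.centralBinom ^ 2 * (2 * m + 1))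
        ≤ 4 * (2 * m + 1) * (2 * m + 3) * 16 ^ m := Nat.mul_le_mul_left _ ih
      _ ≤ (m + 1) ^ 2 * (16 ^ m * 16) := by nlinarith [Nat.one_le_two_pow (n := m)]

theorem mul_choose_sq_le_four_pow (n k : ℕ) : n * n.choose k ^ 2 ≤ 4 ^ n := by
  rcases Nat.even_or_odd' n with ⟨m, rfl | rfl⟩
  · calc 2 * m * (2 * m).choose k ^ 2 ≤ m.centralBinom ^ 2 * (2 * m + 1) := by
          have := Nat.pow_le_pow_left (Nat.choose_le_centralBinom k m) 2
          nlinarith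
      _ ≤ 16 ^ m := centralBinom_sq_mul_le m
      _ = 4 ^ (2 * m) := by rw [pow_mul]; norm_num
  · have hmid : (2 * m + 1).choose k ≤ (2 * m + 1).choose m := by
      simpa [show (2 * m + 1) / 2 = m by omega] using Nat.choose_le_middle k (2 * m + 1)
    have hcentral : 2 * (2 * m + 1).choose m = (m + 1).centralBinom := by
      rw [Nat.centralBinom_eq_two_mul_choose, show 2 * (m + 1) = 2 * m + 1 + 1 by ring,
        Nat.choose_succ_succ, Nat.choose_symm_half]
      ring
    have h16 := centralBinom_sq_mul_le (m + 1)
    rw [← hcentral, pow_succ 16] at h16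
    calc (2 * m + 1) * (2 * m + 1).choose k ^ 2 ≤ (2 * m + 1) * (2 * m + 1).choose m ^ 2 :=
          Nat.mul_le_mul_left _ (Nat.pow_le_pow_left hmid 2)
      _ ≤ 4 * 16 ^ m := by nlinarith
      _ = 4 ^ (2 * m + 1) := by rw [pow_succ, pow_mul]; norm_num; ring

theorem choose_le_two_pow_div_sqrt {n : ℕ} (hn : 0 < n) (k : ℕ) :
    (n.choose k : ℝ) ≤ 2 ^ n / √n := by
  have hsqrt : 0 < √(n : ℝ) := Real.sqrt_pos.mpr (by exact_mod_cast hn)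
  rw [le_div_iff₀ hsqrt]
  refine (pow_le_pow_iff_left₀ (by positivity) (by positivity) two_ne_zero).mp ?_
  rw [mul_pow, Real.sq_sqrt (by positivity), ← pow_mul, mul_comm n 2, pow_mul]
  exact_mod_cast (mul_comm _ _).trans_le (mul_choose_sq_le_four_pow n k)
    |>.trans_eq (by norm_num)

theorem cast_choose_succ_mul (n k : ℕ) :
    ((k : ℝ) + 1) * n.choose (k + 1) = ((n : ℝ) - k) * n.choose k := by
  by_cases hk : k ≤ n
  · have := Nat.choose_succ_right_eq n k
    rw [← Nat.cast_sub hk]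
    exact_mod_cast (mul_comm _ _).trans (this.trans (mul_comm _ _))
  · simp [Nat.choose_eq_zero_of_lt (show n < k by omega),
      Nat.choose_eq_zero_of_lt (show n < k + 1 by omega)]

theorem sum_range_succ_choose_mul {R : Type*} [NonAssocSemiring R] (g : ℕ → R) (n : ℕ) :
    ∑ i ∈ range (n + 1 + 1), ((n + 1).choose i : R) * g i
      = ∑ i ∈ range (n + 1), (n.choose i : R) * (g i + g (i + 1)) := by
  simpa [mul_add, sum_add_distrib] using sum_choose_succ_mul (fun i _ => g i) n

theorem cast_sum_range_choose (n : ℕ) : ∑ i ∈ range (n + 1), (n.choose i : ℝ) = 2 ^ n := by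
  exact_mod_cast Nat.sum_range_choose n

theorem sum_choose_mul_sq (n : ℕ) :
    ∑ i ∈ range (n + 1), (n.choose i : ℝ) * (2 * i - n) ^ 2 = (n : ℝ) * 2 ^ n := by
  induction n with
  | zero => simp
  | succ n ih =>
    rw [sum_range_succ_choose_mul]
    calc _ = 2 * ∑ i ∈ range (n + 1), (n.choose i : ℝ) * (2 * i - n) ^ 2
          + 2 * ∑ i ∈ range (n + 1), (n.choose i : ℝ) := by
          rw [mul_sum, mul_sum, ← sum_add_distrib]
          refine sum_congr rfl fun i _ => ?_
          push_cast
          ring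
      _ = _ := by rw [ih, cast_sum_range_choose]; push_cast; ring

theorem sum_choose_mul_pow_four (n : ℕ) :
    ∑ i ∈ range (n + 1), (n.choose i : ℝ) * (2 * i - n) ^ 4
      = (n : ℝ) * (3 * n - 2) * 2 ^ n := by
  induction n with
  | zero => simp
  | succ n ih =>
    rw [sum_range_succ_choose_mul]
    calc _ = 2 * ∑ i ∈ range (n + 1), (n.choose i : ℝ) * (2 * i - n) ^ 4
          + 12 * ∑ i ∈ range (n + 1), (n.choose i : ℝ) * (2 * i - n) ^ 2
          + 2 * ∑ i ∈ range (n + 1), (n.choose i : ℝ) := by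
          rw [mul_sum, mul_sum, mul_sum, ← sum_add_distrib, ← sum_add_distrib]
          refine sum_congr rfl fun i _ => ?_
          push_cast
          ring
      _ = _ := by rw [ih, sum_choose_mul_sq, cast_sum_range_choose]; push_cast; ring

theorem mul_ballot_eq (n k : ℕ) :
    ((k : ℝ) + 1) * ballot n k = (2 * k - n + 1) * n.choose k := by
  have := cast_choose_succ_mul n k
  rw [ballot]
  linear_combination -this

theorem mul_ballot_second_diff_eq (n k : ℕ) :
    ((k : ℝ) + 1) * (k + 2) * (k + 3) * (ballot n k - 2 * ballot n (k + 1) + ballot n (k + 2))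
      = n.choose k * ((2 * k - n + 3) * ((2 * k - n + 1) * (2 * k - n + 2) - 6 * (n - k))) := by
  have h1 := cast_choose_succ_mul n k
  have h2 := cast_choose_succ_mul n (k + 1)
  have h3 := cast_choose_succ_mul n (k + 2)
  push_cast at h2 h3
  simp only [ballot]
  linear_combination ((-3) * ((k : ℝ) + 2) * (k + 3) + 3 * (k + 3) * (n - k - 1)
      - (n - k - 1) * (n - k - 2)) * h1
    + (3 * ((k : ℝ) + 1) * (k + 3) - (k + 1) * (n - k - 2)) * h2
    + (-(((k : ℝ) + 1) * (k + 2))) * h3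

theorem mul_cubic_le_quartic {x t : ℝ} (hx : 0 ≤ x) (ht : 1 ≤ t) :
    t * ((x + 3) * ((x + 2) ^ 2 + 6 * t ^ 2)) ≤ x ^ 4 + 19 * t ^ 2 * x ^ 2 + 41 * t ^ 4 := by
  nlinarith [sq_nonneg (x ^ 2 - t * x), sq_nonneg (t * x - 1), sq_nonneg (t * x - t ^ 2),
    mul_nonneg hx (sub_nonneg.2 ht), mul_nonneg (mul_nonneg hx hx) (sub_nonneg.2 ht),
    pow_le_pow_left₀ zero_le_one ht 4, mul_nonneg (sq_nonneg t) (sub_nonneg.2 ht)]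

theorem abs_ballot_second_diff_mul_le {n k : ℕ} (hn : 0 < n) (hk : n ≤ 2 * k) :
    |ballot n k - 2 * ballot n (k + 1) + ballot n (k + 2)| * ((n : ℝ) ^ 3 * √n)
      ≤ 8 * (n.choose k * ((2 * k - n) ^ 4 + 19 * n * (2 * k - n) ^ 2 + 41 * n ^ 2)) := by
  by_cases hkn : n < k
  · simp [ballot_eq_zero_of_lt, hkn, show n < k + 1 by omega, show n < k + 2 by omega]
    positivity
  have hx0 : (0 : ℝ) ≤ 2 * k - n := by rw [sub_nonneg]; exact_mod_cast hk
  have ht1 : 1 ≤ √(n : ℝ) := Real.one_le_sqrt.mpr (by exact_mod_cast hn)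
  have htn : √(n : ℝ) ^ 2 = n := Real.sq_sqrt (Nat.cast_nonneg n)
  have hnk : (k : ℝ) ≤ n := by exact_mod_cast not_lt.mp hkn
  have hcubic : (n : ℝ) ^ 3 ≤ 8 * ((k + 1) * (k + 2) * (k + 3)) := by
    have : (n : ℝ) ≤ 2 * k := by exact_mod_cast hk
    nlinarith [pow_le_pow_left₀ (Nat.cast_nonneg n) this 3]
  have hQ : |(2 * k - n + 1) * (2 * k - n + 2) - 6 * ((n : ℝ) - k)|
      ≤ (2 * k - n + 2) ^ 2 + 6 * n := by
    rw [abs_le]; constructor <;> nlinarith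
  set Δ := |ballot n k - 2 * ballot n (k + 1) + ballot n (k + 2)|
  have hid : ((k + 1) * (k + 2) * (k + 3)) * Δ = n.choose k
      * ((2 * k - n + 3) * |(2 * k - n + 1) * (2 * k - n + 2) - 6 * ((n : ℝ) - k)|) := by
    rw [← abs_of_pos (show (0 : ℝ) < (k + 1) * (k + 2) * (k + 3) by positivity), ← abs_mul,
      mul_ballot_second_diff_eq, abs_mul, abs_mul, Nat.abs_cast, abs_of_nonneg (by linarith)]
  calc Δ * ((n : ℝ) ^ 3 * √n) ≤ 8 * (((k + 1) * (k + 2) * (k + 3)) * Δ) * √n := by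
        have := mul_le_mul_of_nonneg_right hcubic
          (mul_nonneg (abs_nonneg _) (Real.sqrt_nonneg n) : 0 ≤ Δ * √n)
        linarith
    _ ≤ 8 * (n.choose k * ((2 * k - n + 3) * ((2 * k - n + 2) ^ 2 + 6 * n))) * √n := by
        rw [hid]; gcongr
    _ ≤ 8 * (n.choose k * ((2 * k - n) ^ 4 + 19 * n * (2 * k - n) ^ 2 + 41 * n ^ 2)) := by
        have := mul_cubic_le_quartic hx0 ht1
        rw [htn] at this
        rw [mul_assoc 8, mul_assoc]
        gcongr
        nlinarith

theorem sum_range_choose_mul_shift_le {g : ℕ → ℝ} (hg : ∀ i, 0 ≤ g i) (n a N : ℕ) :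
    ∑ k ∈ range N, (n.choose (a + k) : ℝ) * g (a + k)
      ≤ ∑ i ∈ range (n + 1), (n.choose i : ℝ) * g i := by
  rw [← Nat.add_sub_cancel_left (n := a) (m := N),
    ← sum_Ico_eq_sum_range (fun i => (n.choose i : ℝ) * g i),
    ← sum_filter_of_ne (p := (· < n + 1)) fun i _ hi => by
      by_contra h
      simp [Nat.choose_eq_zero_of_lt (show n < i by omega)] at hi]
  exact sum_le_sum_of_subset_of_nonneg (fun i hi => mem_range.mpr (mem_filter.mp hi).2)
    fun i _ _ => mul_nonneg (Nat.cast_nonneg _) (hg i)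

theorem sum_abs_ballot_second_diff_le {n a : ℕ} (hn : 0 < n) (ha : n ≤ 2 * a) (N : ℕ) :
    ∑ k ∈ range N, |ballot n (a + k) - 2 * ballot n (a + k + 1) + ballot n (a + k + 2)|
      ≤ 504 * (2 ^ n / (n * √n)) := by
  set g : ℕ → ℝ := fun i => (2 * i - n) ^ 4 + 19 * n * (2 * i - n) ^ 2 + 41 * n ^ 2
  have hg : ∀ i, 0 ≤ g i := fun i => by positivity
  have hmoments : ∑ i ∈ range (n + 1), (n.choose i : ℝ) * g i
      = ((n : ℝ) * (3 * n - 2) + 19 * n * n + 41 * n ^ 2) * 2 ^ n := by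
    simp only [g, mul_add, sum_add_distrib, mul_left_comm _ (19 * (n : ℝ)),
      mul_comm _ (41 * (n : ℝ) ^ 2), ← mul_sum, sum_choose_mul_pow_four, sum_choose_mul_sq,
      cast_sum_range_choose]
    ring
  have hnR : (0 : ℝ) < n := by exact_mod_cast hn
  have hkey : (∑ k ∈ range N,
      |ballot n (a + k) - 2 * ballot n (a + k + 1) + ballot n (a + k + 2)|) * ((n : ℝ) ^ 3 * √n)
      ≤ 504 * 2 ^ n * n ^ 2 := by
    rw [sum_mul]
    calc _ ≤ ∑ k ∈ range N, 8 * ((n.choose (a + k) : ℝ) * g (a + k)) :=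
          sum_le_sum fun k _ => by
            simpa [g] using abs_ballot_second_diff_mul_le hn (show n ≤ 2 * (a + k) by omega)
      _ ≤ 8 * (((n : ℝ) * (3 * n - 2) + 19 * n * n + 41 * n ^ 2) * 2 ^ n) := by
          rw [← mul_sum, ← hmoments]
          gcongr
          exact sum_range_choose_mul_shift_le hg n a N
      _ ≤ 504 * 2 ^ n * n ^ 2 := by nlinarith [pow_pos (two_pos : (0 : ℝ) < 2) n]
  have hsqrt : 0 < √(n : ℝ) := Real.sqrt_pos.mpr hnR
  rw [← mul_div_assoc, le_div_iff₀ (by positivity)]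
  refine le_of_mul_le_mul_right ?_ (pow_pos hnR 2)
  linarith

theorem abs_ballot_le {n k : ℕ} (hn : 0 < n) (hk : n ≤ 2 * k) :
    |ballot n k| ≤ 2 * (2 * k - n + 1) * (2 ^ n / (n * √n)) := by
  have hnR : (0 : ℝ) < n := by exact_mod_cast hn
  have hx : (0 : ℝ) ≤ 2 * k - n := by rw [sub_nonneg]; exact_mod_cast hk
  have hb : ballot n k = (2 * k - n + 1) * n.choose k / (k + 1) := by
    rw [eq_div_iff (by positivity), mul_comm, mul_ballot_eq]
  have hC : (n.choose k : ℝ) ≤ 2 ^ n / (n * √n) * (2 * (k + 1)) := calc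
    (n.choose k : ℝ) ≤ 2 ^ n / √n := choose_le_two_pow_div_sqrt hn k
    _ = 2 ^ n / (n * √n) * n := by field_simp
    _ ≤ 2 ^ n / (n * √n) * (2 * (k + 1)) := by
        gcongr
        have : (n : ℝ) ≤ 2 * k := by exact_mod_cast hk
        linarith
  rw [hb, abs_of_nonneg (by positivity), div_le_iff₀ (by positivity)]
  calc (2 * k - n + 1) * (n.choose k : ℝ)
      ≤ (2 * k - n + 1) * (2 ^ n / (n * √n) * (2 * (k + 1))) := by gcongr
    _ = _ := by ring

theorem abs_cc_sub_cc_add_two_le {d n r : ℕ} (hn : 0 < n) (hr : r + 2 < 2 * d)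
    (hpar : (n + r) % 2 = 0) :
    |(cc (2 * d) n r : ℝ) - cc (2 * d) n (r + 2)| ≤ 508 * (2 ^ n / (n * √n)) := by
  set k := (n + r) / 2
  set E : ℝ := 2 ^ n / (n * √n)
  set G : ℕ → ℝ := fun i => ballot n i - ballot n (i + 1)
  have hdiff :
      (cc (2 * d) n r : ℝ) - cc (2 * d) n (r + 2) = ∑ j ∈ range (n + 1), G (k + j * d) := by
    rw [cc_eq_sum_ballot (by omega) hpar, cc_eq_sum_ballot (by omega) (by omega),
      ← sum_sub_distrib]
    refine sum_congr rfl fun j _ => ?_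
    rw [show (n + (r + 2)) / 2 + j * d = k + j * d + 1 by omega]
  have htele : ∑ i ∈ range ((n + 1) * d), G (k + i) = ballot n k := by
    simp only [G, add_assoc]
    rw [sum_range_sub' (fun i => ballot n (k + i)), add_zero,
      ballot_eq_zero_of_lt (show n < k + (n + 1) * d by nlinarith), sub_zero]
  have hsample := norm_nsmul_sum_sub_sum_le G k d (n + 1)
  simp only [Real.norm_eq_abs, nsmul_eq_mul, ← hdiff, htele] at hsample
  have hsecond : ∑ i ∈ range ((n + 1) * d), |G (k + i) - G (k + i + 1)| ≤ 504 * E := by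
    simpa only [G, show ∀ i, ballot n i - ballot n (i + 1)
        - (ballot n (i + 1) - ballot n (i + 1 + 1))
        = ballot n i - 2 * ballot n (i + 1) + ballot n (i + 2) from fun i => by ring]
      using sum_abs_ballot_second_diff_le hn (show n ≤ 2 * k by omega) ((n + 1) * d)
  have hfirst : |ballot n k| ≤ 4 * d * E := by
    have hk : (2 * k - n : ℝ) = r := by
      rw [sub_eq_iff_eq_add]; exact_mod_cast (show 2 * k = r + n by omega)
    have hr' : (r : ℝ) + 1 ≤ 2 * d := by exact_mod_cast (show r + 1 ≤ 2 * d by omega)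
    have := abs_ballot_le hn (show n ≤ 2 * k by omega)
    rw [hk] at this
    nlinarith [show 0 ≤ E by positivity]
  have hd : (0 : ℝ) < d := by exact_mod_cast (show 0 < d by omega)
  have hscaled :
      |(d : ℝ) * ((cc (2 * d) n r : ℝ) - cc (2 * d) n (r + 2))| ≤ d * (508 * E) := by
    have := abs_sub_abs_le_abs_sub ((d : ℝ) * ((cc (2 * d) n r : ℝ) - cc (2 * d) n (r + 2)))
      (ballot n k)
    have := mul_le_mul_of_nonneg_left hsecond hd.le
    linarith
  rw [abs_mul, Nat.abs_cast] at hscaled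
  exact le_of_mul_le_mul_left hscaled hd

theorem abs_sub_sum_div_le {x : ℕ → ℝ} {d : ℕ} {B : ℝ} (hB : 0 ≤ B)
    (hx : ∀ i, i + 1 < d → |x i - x (i + 1)| ≤ B) {i : ℕ} (hi : i < d) :
    |x i - (∑ j ∈ range d, x j) / d| ≤ d * B := by
  have hchain : ∀ l m, l ≤ m → m < d → |x l - x m| ≤ d * B := fun l m hlm hm => calc
    |x l - x m| ≤ ∑ p ∈ Ico l m, |x p - x (p + 1)| := by
        simpa only [Real.dist_eq] using dist_le_Ico_sum_dist x hlm
    _ ≤ ∑ p ∈ Ico l m, B := sum_le_sum fun p hp => hx p (by simp at hp; omega)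
    _ ≤ d * B := by
        rw [sum_const, Nat.card_Ico, nsmul_eq_mul]
        gcongr
        exact_mod_cast (show m - l ≤ d by omega)
  have hpair : ∀ j ∈ range d, |x i - x j| ≤ d * B := fun j hj => by
    rcases le_total i j with h | h
    · exact hchain i j h (mem_range.mp hj)
    · rw [abs_sub_comm]; exact hchain j i h hi
  have hd : (0 : ℝ) < d := by exact_mod_cast (show 0 < d by omega)
  rw [show x i - (∑ j ∈ range d, x j) / d = (∑ j ∈ range d, (x i - x j)) / d by
    rw [sum_sub_distrib, sum_const, card_range, nsmul_eq_mul]; field_simp,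
    abs_div, abs_of_pos hd, div_le_iff₀ hd]
  calc |∑ j ∈ range d, (x i - x j)| ≤ ∑ j ∈ range d, |x i - x j| := abs_sum_le_sum_abs _ _
    _ ≤ ∑ j ∈ range d, (d * B) := sum_le_sum hpair
    _ = d * B * d := by rw [sum_const, card_range, nsmul_eq_mul, mul_comm]

/-- For even `ℓ ≥ 2` and `0 ≤ r < ℓ`: for all `n ≥ 1` with `r ≡ n (mod 2)`,
`|c(n,r) − 2·a(n)/ℓ| ≤ C·n^{-3/2}·2^n`. -/
theorem stmt5 (ℓ : ℕ) (hℓ : 2 ≤ ℓ) (heven : Even ℓ) (r : ℕ) (hr : r < ℓ) :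
    ∃ C : ℝ, 0 < C ∧ ∀ n : ℕ, 1 ≤ n → r % 2 = n % 2 →
      |(cc ℓ n r : ℝ) - 2 * (aSum n : ℝ) / ℓ| ≤ C * (n : ℝ) ^ (-(3 : ℝ)/2) * 2 ^ n := by
  obtain ⟨d, rfl⟩ := heven.two_dvd
  have hd : 0 < d := by omega
  refine ⟨d * 508, by positivity, fun n hn hpar => ?_⟩
  obtain ⟨i, hi, rfl⟩ : ∃ i < d, r = n % 2 + 2 * i := ⟨r / 2, by omega, by omega⟩
  have hclose := abs_sub_sum_div_le (x := fun j => (cc (2 * d) n (n % 2 + 2 * j) : ℝ))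
    (B := 508 * (2 ^ n / (n * √n))) (by positivity) (fun j hj => by
      rw [show n % 2 + 2 * (j + 1) = n % 2 + 2 * j + 2 by ring]
      exact abs_cc_sub_cc_add_two_le hn (by omega) (by omega)) hi
  have hnR : (0 : ℝ) < n := by exact_mod_cast hn
  have hrpow : (n : ℝ) ^ (-(3 : ℝ) / 2) = (n * √n)⁻¹ := by
    rw [Real.sqrt_eq_rpow, show -(3 : ℝ) / 2 = -(1 + 1 / 2) by norm_num, Real.rpow_neg hnR.le,
      Real.rpow_add hnR, Real.rpow_one]
  simp only [← Nat.cast_sum, sum_cc_eq_aSum n hd] at hclose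
  convert hclose using 1
  · rw [Nat.cast_mul, Nat.cast_two, mul_div_mul_left _ _ two_ne_zero]
  · rw [hrpow]; ring
end

section
/- Let ℓ = 2. Then for every odd natural number n one has b(n) = a(n), and for every even natural number n ≥ 2 one has b(n) = a(n−1). -/
open Filter Real

/-!
For `ℓ = 2` the residue `ℓ - 2` is `0`, so `b` copies `a` at odd heights and, at even heights,
copies the odd height just below from the previous step: `b(n+1, m) = a(n, m-1)` for even `m`.
Since `a(n, m)` vanishes unless `n ≡ m (mod 2)`, for odd `n` only odd heights contribute and
`b(n) = a(n)`, while for even `n` only even heights contribute and `b(n)` is the sum of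
`a(n-1, m-1)` over `m ≥ 1`, i.e. `a(n-1)`.
-/

open Finset

lemma aa_eq_zero_of_add_mod_two (n m : ℕ) (h : (n + m) % 2 = 1) : aa n m = 0 := by
  induction n generalizing m with
  | zero => simp [aa, show m ≠ 0 by omega]
  | succ n ih =>
    rw [aa, ih (m + 1) (by omega)]
    split_ifs with hm
    · rfl
    · rw [ih (m - 1) (by omega)]

lemma bb_two_of_mod_two_eq_one (n m : ℕ) (h : m % 2 = 1) : bb 2 n m = aa n m := by
  cases n <;> simp [bb, h]

lemma bb_two_succ_of_mod_two_eq_zero (n m : ℕ) (h : m % 2 = 0) :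
    bb 2 (n + 1) m = if m = 0 then 0 else aa n (m - 1) := by
  rcases Nat.eq_zero_or_pos m with rfl | hm
  · simp [bb]
  · simp [bb, h, hm.ne', bb_two_of_mod_two_eq_one n (m - 1) (by omega)]

lemma bb_two_eq_aa_of_odd (n m : ℕ) (hn : Odd n) : bb 2 n m = aa n m := by
  rcases Nat.even_or_odd m with hm | hm
  · obtain ⟨n, rfl⟩ := Nat.exists_eq_add_one_of_ne_zero hn.pos.ne'
    have hn := Nat.odd_iff.mp hn
    have hm := Nat.even_iff.mp hm
    rw [bb_two_succ_of_mod_two_eq_zero n m hm, aa_eq_zero_of_add_mod_two (n + 1) m (by omega)]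
    split_ifs with h0
    · rfl
    · exact aa_eq_zero_of_add_mod_two n (m - 1) (by omega)
  · exact bb_two_of_mod_two_eq_one n m (Nat.odd_iff.mp hm)

lemma bb_two_succ_of_even (n m : ℕ) (hn : Even (n + 1)) :
    bb 2 (n + 1) m = if m = 0 then 0 else aa n (m - 1) := by
  rcases Nat.even_or_odd m with hm | hm
  · exact bb_two_succ_of_mod_two_eq_zero n m (Nat.even_iff.mp hm)
  · have hn := Nat.even_iff.mp hn
    have hm := Nat.odd_iff.mp hm
    rw [bb_two_of_mod_two_eq_one _ _ hm, aa_eq_zero_of_add_mod_two _ _ (by omega),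
      if_neg (by omega), aa_eq_zero_of_add_mod_two _ _ (by omega)]

/-- For `ℓ = 2`: `b(n) = a(n)` for odd `n`, and `b(n) = a(n-1)` for even `n ≥ 2`. -/
theorem stmt9 :
    (∀ n : ℕ, Odd n → bSum 2 n = aSum n) ∧
    (∀ n : ℕ, Even n → 2 ≤ n → bSum 2 n = aSum (n - 1)) := by
  refine ⟨fun n hn => sum_congr rfl fun m _ => bb_two_eq_aa_of_odd n m hn, fun n hn hn2 => ?_⟩
  obtain ⟨n, rfl⟩ := Nat.exists_eq_add_one_of_ne_zero (show n ≠ 0 by omega)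
  simp only [bSum, bb_two_succ_of_even n _ hn, sum_range_succ' _ (n + 1)]
  simp [aSum]
end
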